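/- arXiv:1004.4798 — 7 statements merged into one kernel-verified Lean document; each statement's English description precedes it below -/
import Mathlib

section
/- A Boolean algebra B is superatomic (every homomorphic image is atomic) if and only if its Stone space S(B) is scattered (every nonempty closed subspace has an isolated point). -/
open Cardinal

universe u

/-- A Boolean algebra is superatomic iff every homomorphic image is atomic. -/
def Superatomic (B : Type u) [BooleanAlgebra B] : Prop :=
  ∀ (C : Type u) (_ : BooleanAlgebra C) (f : BoundedLatticeHom B C),
    Function.Surjective f → IsAtomic C

/-- The Stone space of a Boolean algebra: the bounded lattice homomorphisms to `Bool`
(equivalently, ultrafilters on `B`), with the topology induced from the product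
topology on `B → Bool` (`Bool` discrete). -/
def StoneSpace (B : Type u) [BooleanAlgebra B] : Type u :=
  BoundedLatticeHom B Bool

noncomputable instance (B : Type u) [BooleanAlgebra B] : TopologicalSpace (StoneSpace B) :=
  TopologicalSpace.induced (fun f : StoneSpace B => (DFunLike.coe (F := BoundedLatticeHom B Bool) f : B → Bool)) inferInstance

/-- A topological space is scattered iff every nonempty subset has a point isolated in it. -/
def Scattered (X : Type u) [TopologicalSpace X] : Prop :=
  ∀ S : Set X, S.Nonempty → ∃ x ∈ S, ∃ U : Set X, IsOpen U ∧ U ∩ S = {x}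

namespace StoneAux

/-- View a point of the Stone space as a bounded lattice hom. -/
def h {B : Type u} [BooleanAlgebra B] (x : StoneSpace B) : BoundedLatticeHom B Bool := x

/-- The map to the product space. -/
noncomputable def pi (B : Type u) [BooleanAlgebra B] : StoneSpace B → (B → Bool) :=
  fun f => (DFunLike.coe (F := BoundedLatticeHom B Bool) f : B → Bool)

lemma pi_apply {B : Type u} [BooleanAlgebra B] (x : StoneSpace B) (b : B) :
    pi B x b = h x b := rfl

lemma continuous_pi (B : Type u) [BooleanAlgebra B] : Continuous (pi B) :=
  continuous_induced_dom

/-- Ultrafilter existence: every nonzero element lies in some `Bool`-valued hom. -/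
lemma exists_hom_bool {C : Type*} [BooleanAlgebra C] {c : C} (hc : c ≠ ⊥) :
    ∃ y : BoundedLatticeHom C Bool, y c = true := by
  classical
  obtain ⟨J, hJp, -, hdisj⟩ := DistribLattice.prime_ideal_of_disjoint_filter_ideal
    (F := Order.PFilter.principal c) (I := Order.Ideal.principal ⊥)
    (by
      rw [Set.disjoint_left]
      intro x hxF hxI
      exact hc (le_antisymm (le_trans (Order.PFilter.mem_principal.mp hxF) hxI) bot_le))
  have hcJ : c ∉ J := Set.disjoint_left.mp hdisj (Order.PFilter.mem_principal.mpr le_rfl)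
  have hproper : Order.Ideal.IsProper J := hJp.toIsProper
  refine ⟨⟨⟨⟨fun x => decide (x ∉ J), ?_⟩, ?_⟩, ?_, ?_⟩, ?_⟩
  · -- map_sup
    intro a b
    have hmem : a ⊔ b ∈ J ↔ a ∈ J ∧ b ∈ J :=
      ⟨fun hab => ⟨J.lower le_sup_left hab, J.lower le_sup_right hab⟩,
       fun hab => J.sup_mem hab.1 hab.2⟩
    by_cases ha : a ∈ J <;> by_cases hb : b ∈ J <;>
      simp [ha, hb, hmem]
  · -- map_inf
    intro a b
    have hmem : a ⊓ b ∈ J ↔ a ∈ J ∨ b ∈ J :=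
      ⟨fun hab => hJp.mem_or_mem hab,
       fun hab => hab.elim (fun hx => J.lower inf_le_left hx) (fun hx => J.lower inf_le_right hx)⟩
    by_cases ha : a ∈ J <;> by_cases hb : b ∈ J <;>
      simp [ha, hb, hmem]
  · -- map_top
    simp [hproper.top_notMem]
  · -- map_bot
    simp [J.bot_mem]
  · simp [hcJ]

lemma true_of_le {C : Type*} [BooleanAlgebra C] (y : BoundedLatticeHom C Bool) {a b : C}
    (hab : a ≤ b) (ha : y a = true) : y b = true := by
  have := OrderHomClass.mono y hab
  rw [ha] at this
  exact Bool.le_iff_imp.mp this rfl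

/-- Key topological lemma: basic clopen neighborhoods. -/
lemma finset_inf_true {α : Type*} (I : Finset α) (g : α → Bool) :
    I.inf g = true ↔ ∀ a ∈ I, g a = true := by
  rw [show (true : Bool) = ⊤ from rfl, Finset.inf_eq_top_iff]

lemma exists_basic {B : Type u} [BooleanAlgebra B] {x₀ : StoneSpace B} {U : Set (StoneSpace B)}
    (hU : IsOpen U) (hx : x₀ ∈ U) :
    ∃ b : B, h x₀ b = true ∧ ∀ z : StoneSpace B, h z b = true → z ∈ U := by
  classical
  obtain ⟨V, hV, hUV⟩ := isOpen_induced_iff.mp hU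
  have hxV : pi B x₀ ∈ V := by
    rw [← hUV] at hx; exact hx
  obtain ⟨I, uset, hI, hsub⟩ := isOpen_pi_iff.mp hV (pi B x₀) hxV
  refine ⟨I.inf (fun a => if h x₀ a = true then a else aᶜ), ?_, ?_⟩
  · rw [map_finset_inf, finset_inf_true]
    intro a _
    simp only [Function.comp_apply]
    by_cases hxa : h x₀ a = true
    · rw [if_pos hxa]; exact hxa
    · have hfa : h x₀ a = false := by
        cases hb : h x₀ a
        · rfl
        · exact absurd hb hxa
      rw [if_neg hxa, map_compl', hfa]
      rfl
  · intro z hz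
    rw [map_finset_inf, finset_inf_true] at hz
    have hzU : ∀ a ∈ I, h z a = h x₀ a := by
      intro a ha
      have hza := hz a ha
      simp only [Function.comp_apply] at hza
      by_cases hxa : h x₀ a = true
      · rw [hxa]
        rw [if_pos hxa] at hza
        exact hza
      · have hfa : h x₀ a = false := by
          cases hb : h x₀ a
          · rfl
          · exact absurd hb hxa
        rw [hfa]
        rw [if_neg hxa, map_compl'] at hza
        cases hb : h z a
        · rfl
        · rw [hb] at hza
          simp at hza
    have hmem : pi B z ∈ (I : Set B).pi uset := by
      intro a ha
      rw [pi_apply, hzU a ha, ← pi_apply]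
      exact (hI a ha).2
    have := hsub hmem
    rw [← hUV]
    exact this

section Image

variable {B : Type u} [BooleanAlgebra B] (S : Set (StoneSpace B))

/-- The image of `B` in `↥S → Bool`, as a type. -/
def Img : Type u := {g : ↥S → Bool // ∃ b : B, (fun x : ↥S => h x.1 b) = g}

variable {S}

lemma mem_img (b : B) : ∃ b' : B, (fun x : ↥S => h x.1 b') = fun x : ↥S => h x.1 b :=
  ⟨b, rfl⟩

noncomputable instance : Max (Img S) :=
  ⟨fun a b => ⟨a.1 ⊔ b.1, by
    obtain ⟨p, hp⟩ := a.2; obtain ⟨q, hq⟩ := b.2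
    exact ⟨p ⊔ q, by funext x; rw [← hp, ← hq]; simp [map_sup]⟩⟩⟩

noncomputable instance : Min (Img S) :=
  ⟨fun a b => ⟨a.1 ⊓ b.1, by
    obtain ⟨p, hp⟩ := a.2; obtain ⟨q, hq⟩ := b.2
    exact ⟨p ⊓ q, by funext x; rw [← hp, ← hq]; simp [map_inf]⟩⟩⟩

noncomputable instance : Top (Img S) :=
  ⟨⟨⊤, ⟨⊤, by funext x; simp⟩⟩⟩

noncomputable instance : Bot (Img S) :=
  ⟨⟨⊥, ⟨⊥, by funext x; simp⟩⟩⟩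

noncomputable instance : Compl (Img S) :=
  ⟨fun a => ⟨a.1ᶜ, by
    obtain ⟨p, hp⟩ := a.2
    exact ⟨pᶜ, by funext x; rw [← hp]; simp [map_compl']⟩⟩⟩

noncomputable instance : SDiff (Img S) :=
  ⟨fun a b => ⟨a.1 \ b.1, by
    obtain ⟨p, hp⟩ := a.2; obtain ⟨q, hq⟩ := b.2
    exact ⟨p \ q, by funext x; rw [← hp, ← hq]; simp [map_sdiff']⟩⟩⟩

noncomputable instance : HImp (Img S) :=
  ⟨fun a b => ⟨a.1 ⇨ b.1, by
    obtain ⟨p, hp⟩ := a.2; obtain ⟨q, hq⟩ := b.2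
    exact ⟨p ⇨ q, by
      funext x
      rw [← hp, ← hq]
      simp only [himp_eq, map_sup, map_compl']
      rfl⟩⟩⟩

instance : LE (Img S) := ⟨fun a b => a.1 ≤ b.1⟩

instance : LT (Img S) := ⟨fun a b => a.1 < b.1⟩

noncomputable instance : BooleanAlgebra (Img S) :=
  Function.Injective.booleanAlgebra Subtype.val Subtype.val_injective
    Iff.rfl Iff.rfl (fun _ _ => rfl) (fun _ _ => rfl) rfl rfl (fun _ => rfl) (fun _ _ => rfl) (fun _ _ => rfl)

lemma Img.inf_val (a b : Img S) : (a ⊓ b).1 = a.1 ⊓ b.1 := rfl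

lemma Img.bot_val : (⊥ : Img S).1 = ⊥ := rfl

lemma Img.top_val : (⊤ : Img S).1 = ⊤ := rfl

lemma Img.le_iff {a b : Img S} : a ≤ b ↔ a.1 ≤ b.1 := by
  rw [← inf_eq_left, ← inf_eq_left (a := a.1) (b := b.1)]
  constructor
  · intro hab
    have := congrArg Subtype.val hab
    rwa [Img.inf_val] at this
  · intro hab
    exact Subtype.ext (by rw [Img.inf_val]; exact hab)

/-- The evaluation hom from `B` onto its image. -/
noncomputable def evHom : BoundedLatticeHom B (Img S) where
  toFun := fun b => ⟨fun x : ↥S => h x.1 b, ⟨b, rfl⟩⟩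
  map_sup' := fun a b => Subtype.ext (by funext x; exact map_sup (h x.1) a b)
  map_inf' := fun a b => Subtype.ext (by funext x; exact map_inf (h x.1) a b)
  map_top' := Subtype.ext (by funext x; exact map_top (h x.1))
  map_bot' := Subtype.ext (by funext x; exact map_bot (h x.1))

lemma evHom_surjective : Function.Surjective (evHom (S := S)) := by
  rintro ⟨g, b, hb⟩
  exact ⟨b, Subtype.ext hb⟩

lemma evHom_val (b : B) (x : ↥S) : (evHom (S := S) b).1 x = h x.1 b := rfl

end Image

end StoneAux

open StoneAux in
/-- A Boolean algebra is superatomic iff its Stone space is scattered. -/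
theorem superatomic_iff_stoneSpace_scattered (B : Type u) [BooleanAlgebra B] :
    Superatomic B ↔ Scattered (StoneSpace B) := by
  constructor
  · -- Superatomic → Scattered
    intro hsup S hS
    obtain ⟨x₀, hx₀⟩ := hS
    have hatomic : IsAtomic (Img S) := hsup (Img S) inferInstance evHom evHom_surjective
    have htopne : (⊤ : Img S) ≠ ⊥ := by
      intro hcontra
      have : (⊤ : ↥S → Bool) ⟨x₀, hx₀⟩ = (⊥ : ↥S → Bool) ⟨x₀, hx₀⟩ :=
        congrFun (congrArg Subtype.val hcontra) ⟨x₀, hx₀⟩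
      simp at this
    obtain ⟨g, hg, -⟩ := (hatomic.eq_bot_or_exists_atom_le ⊤).resolve_left htopne
    obtain ⟨b, hb⟩ := g.2
    -- there is a point of S where b is true
    have hne : ∃ x : ↥S, h x.1 b = true := by
      by_contra hcon
      push_neg at hcon
      apply hg.1
      apply Subtype.ext
      rw [← hb]
      funext x
      cases hc : h x.1 b
      · rfl
      · exact absurd hc (hcon x)
    obtain ⟨x, hx⟩ := hne
    -- uniqueness
    have huniq : ∀ z : ↥S, h z.1 b = true → z.1 = x.1 := by
      intro z hz
      by_contra hne
      have hneq : ∃ c : B, h z.1 c ≠ h x.1 c := by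
        by_contra hcon
        push_neg at hcon
        exact hne (DFunLike.ext (h z.1) (h x.1) hcon)
      obtain ⟨c, hc⟩ := hneq
      -- produce c' with z true, x false
      have hc' : ∃ c' : B, h z.1 c' = true ∧ h x.1 c' = false := by
        cases hz1 : h z.1 c <;> cases hx1 : h x.1 c
        · exact absurd (hz1.trans hx1.symm) hc
        · refine ⟨cᶜ, ?_, ?_⟩
          · rw [map_compl', hz1]; rfl
          · rw [map_compl', hx1]; rfl
        · exact ⟨c, hz1, hx1⟩
        · exact absurd (hz1.trans hx1.symm) hc
      obtain ⟨c', hzc, hxc⟩ := hc'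
      set g' : Img S := evHom (b ⊓ c') with hg'def
      have hle : g' ≤ g := by
        rw [Img.le_iff]
        intro w
        rw [evHom_val, ← hb]
        rw [map_inf]
        exact inf_le_left
      have hg'ne : g' ≠ ⊥ := by
        intro hcontra
        have := congrFun (congrArg Subtype.val hcontra) z
        rw [Img.bot_val] at this
        rw [evHom_val, map_inf, hz, hzc] at this
        simp at this
      have hg'neg : g' ≠ g := by
        intro hcontra
        have := congrFun (congrArg Subtype.val hcontra) x
        rw [← hb, evHom_val, map_inf, hx, hxc] at this
        simp [hx] at this
      exact hg'ne (hg.2 g' (lt_of_le_of_ne hle hg'neg))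
    refine ⟨x.1, x.2, {w : StoneSpace B | h w b = true}, ?_, ?_⟩
    · have : {w : StoneSpace B | h w b = true} =
          (pi B) ⁻¹' ((fun v : B → Bool => v b) ⁻¹' {true}) := rfl
      rw [this]
      exact (((continuous_apply b).comp (continuous_pi B)).isOpen_preimage _ (isOpen_discrete _))
    · ext w
      constructor
      · rintro ⟨hw1, hw2⟩
        exact huniq ⟨w, hw2⟩ hw1
      · rintro rfl
        exact ⟨hx, x.2⟩
  · -- Scattered → Superatomic
    intro hsc C instC f hf
    constructor
    intro c
    by_cases hc : c = ⊥
    · exact Or.inl hc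
    right
    obtain ⟨b₀, hb₀⟩ := hf c
    set S : Set (StoneSpace B) :=
      {x | (∃ y : BoundedLatticeHom C Bool, x = y.comp f) ∧ h x b₀ = true} with hSdef
    have hSne : S.Nonempty := by
      obtain ⟨y, hy⟩ := exists_hom_bool hc
      refine ⟨y.comp f, ⟨y, rfl⟩, ?_⟩
      show y (f b₀) = true
      rw [hb₀]; exact hy
    obtain ⟨x₀, hx₀S, U, hU, hUS⟩ := hsc S hSne
    have hx₀U : x₀ ∈ U := by
      have : x₀ ∈ U ∩ S := by rw [hUS]; rfl
      exact this.1
    obtain ⟨b, hx₀b, hbU⟩ := exists_basic hU hx₀U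
    obtain ⟨y₀, hy₀⟩ := hx₀S.1
    -- the candidate atom
    have hkey : ∀ y : BoundedLatticeHom C Bool, y (f b ⊓ c) = true → y.comp f = x₀ := by
      intro y hy
      have hyfb : y (f b) = true := true_of_le y inf_le_left hy
      have hyc : y c = true := true_of_le y inf_le_right hy
      have hmem : y.comp f ∈ S := by
        refine ⟨⟨y, rfl⟩, ?_⟩
        show y (f b₀) = true
        rw [hb₀]; exact hyc
      have hmemb : (y.comp f : StoneSpace B) ∈ {w : StoneSpace B | h w b = true} := hyfb
      have : (y.comp f : StoneSpace B) ∈ U ∩ S := ⟨hbU _ hmemb, hmem⟩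
      rw [hUS] at this
      exact this
    have hx₀bc : h x₀ (b ⊓ b₀) = true := by
      rw [map_inf, hx₀b, hx₀S.2]
      rfl
    have hane : f b ⊓ c ≠ ⊥ := by
      intro hcontra
      have hxa : h x₀ (b ⊓ b₀) = y₀ (f b ⊓ c) := by
        rw [hy₀]
        show (y₀.comp f) (b ⊓ b₀) = _
        rw [map_inf, map_inf]
        show y₀ (f b) ⊓ y₀ (f b₀) = _
        rw [hb₀]
      rw [hcontra, map_bot] at hxa
      rw [hx₀bc] at hxa
      simp at hxa
    refine ⟨f b ⊓ c, ⟨hane, ?_⟩, inf_le_right⟩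
    -- minimality
    intro d hd
    by_contra hdne
    obtain ⟨y, hy⟩ := exists_hom_bool hdne
    have hyd : y (f b ⊓ c) = true := true_of_le y hd.le hy
    have hsd : (f b ⊓ c) \ d ≠ ⊥ := by
      intro hbot
      rw [sdiff_eq_bot_iff] at hbot
      exact absurd (le_antisymm hd.le hbot) hd.ne
    obtain ⟨y', hy'⟩ := exists_hom_bool hsd
    have hy'a : y' (f b ⊓ c) = true := true_of_le y' sdiff_le hy'
    have h1 := hkey y hyd
    have h2 := hkey y' hy'a
    obtain ⟨bd, hbd⟩ := hf d
    have e1 : y (f bd) = true := by rw [hbd]; exact hy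
    have e2 : y' (f bd) = false := by
      rw [hbd]
      have hdisj : d ⊓ ((f b ⊓ c) \ d) = ⊥ := by
        rw [inf_sdiff_self_right]
      cases he : y' d
      · rfl
      · exfalso
        have : y' (d ⊓ ((f b ⊓ c) \ d)) = true := by
          rw [map_inf, he, hy']
          rfl
        rw [hdisj, map_bot] at this
        simp at this
    have : (y.comp f : StoneSpace B) bd = (y'.comp f : StoneSpace B) bd := by
      rw [h1, h2]
    rw [show (y.comp f : StoneSpace B) bd = y (f bd) from rfl,
      show (y'.comp f : StoneSpace B) bd = y' (f bd) from rfl, e1, e2] at this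
    simp at this
end

section
/- Let T = ⟨T,⪯⟩ be an s-poset for a sequence s = ⟨κ_α : α < δ⟩ of infinite cardinals, and let X_T be the topological space on T generated by the subbase consisting of all sets U(x) = {y ∈ T : y ⪯ x} and their complements, for x ∈ T. Then X_T is a Hausdorff topological space in which each U(x) is compact open; in particular X_T is locally compact. -/
open Cardinal

/-- The underlying set of an `s`-poset for `s = ⟨κ_α : α < δ⟩`:
`T = ⋃_{α<δ} T_α` where `T_α = {α} × κ_α`. -/
def SCarrier (δ : Ordinal.{0}) (κ : Ordinal.{0} → Cardinal.{0}) : Type 1 :=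
  {p : Ordinal × Ordinal // p.1 < δ ∧ p.2 < (κ p.1).ord}

/-- An `s`-poset for the sequence `s = ⟨κ_α : α < δ⟩` (Bagaria). -/
structure SPoset (δ : Ordinal.{0}) (κ : Ordinal.{0} → Cardinal.{0}) : Type 1 where
  le : SCarrier δ κ → SCarrier δ κ → Prop
  le_refl : ∀ s, le s s
  le_antisymm : ∀ s t, le s t → le t s → s = t
  le_trans : ∀ s t u, le s t → le t u → le s u
  /-- (2): `s ≺ t` implies that the level of `s` is below the level of `t`. -/
  lt_levels : ∀ s t, le s t → s ≠ t → s.1.1 < t.1.1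
  /-- (3): every pair has a finite set generating its common lower bounds. -/
  inf : ∀ s t : SCarrier δ κ, s ≠ t → ∃ F : Finset (SCarrier δ κ),
    ∀ u, (le u s ∧ le u t) ↔ ∃ v ∈ F, le u v
  /-- (4): each point of a higher level has infinitely many strict predecessors in each
  lower level. -/
  pred_infinite : ∀ α β : Ordinal, α < β → β < δ → ∀ t : SCarrier δ κ, t.1.1 = β →
    {s : SCarrier δ κ | s.1.1 = α ∧ le s t ∧ s ≠ t}.Infinite

/-- `U(x) = {y : y ⪯ x}`. -/
def SPoset.U {δ : Ordinal.{0}} {κ : Ordinal.{0} → Cardinal.{0}} (T : SPoset δ κ)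
    (x : SCarrier δ κ) : Set (SCarrier δ κ) :=
  {y | T.le y x}

/-- The topology on `T` generated by the subbase `{U(x), T \ U(x) : x ∈ T}`. -/
def SPoset.topology {δ : Ordinal.{0}} {κ : Ordinal.{0} → Cardinal.{0}} (T : SPoset δ κ) :
    TopologicalSpace (SCarrier δ κ) :=
  TopologicalSpace.generateFrom {S | ∃ x, S = T.U x ∨ S = (T.U x)ᶜ}

section Aux
variable {δ : Ordinal.{0}} {κ : Ordinal.{0} → Cardinal.{0}} (T : SPoset δ κ)

lemma SPoset.isOpen_U (x : SCarrier δ κ) : @IsOpen _ T.topology (T.U x) :=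
  TopologicalSpace.isOpen_generateFrom_of_mem ⟨x, Or.inl rfl⟩

lemma SPoset.isOpen_U_compl (x : SCarrier δ κ) : @IsOpen _ T.topology (T.U x)ᶜ :=
  TopologicalSpace.isOpen_generateFrom_of_mem ⟨x, Or.inr rfl⟩

lemma SPoset.isCompact_U (x : SCarrier δ κ) : @IsCompact _ T.topology (T.U x) := by
  letI := T.topology
  rw [isCompact_iff_ultrafilter_le_nhds]
  intro f hf
  rw [Filter.le_principal_iff] at hf
  -- the set of candidate limits
  set D : Set (SCarrier δ κ) := {y | T.le y x ∧ T.U y ∈ f} with hD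
  have hxD : x ∈ D := ⟨T.le_refl x, hf⟩
  -- choose y ∈ D of minimal level
  obtain ⟨o, ⟨y, hyD, hyo⟩, ho⟩ := Ordinal.lt_wf.has_min {o | ∃ y ∈ D, y.1.1 = o}
    ⟨x.1.1, x, hxD, rfl⟩
  refine ⟨y, hyD.1, ?_⟩
  -- show f ≤ 𝓝 y : every subbasic open set containing y is in f
  have hn : (nhds y : Filter (SCarrier δ κ)) =
      ⨅ S ∈ {S | y ∈ S ∧ S ∈ {S | ∃ x, S = T.U x ∨ S = (T.U x)ᶜ}}, Filter.principal S :=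
    TopologicalSpace.nhds_generateFrom
  rw [hn]
  refine le_iInf₂ fun S hS => ?_
  obtain ⟨hyS, z, hz | hz⟩ := hS
  · -- S = U z, y ∈ U z, so U y ⊆ U z
    subst hz
    rw [Filter.le_principal_iff]
    exact f.mem_of_superset hyD.2 fun u hu => T.le_trans u y z hu hyS
  · -- S = (U z)ᶜ, ¬ y ⪯ z; show U z ∉ f
    subst hz
    rw [Filter.le_principal_iff, Ultrafilter.mem_coe, Ultrafilter.compl_mem_iff_notMem]
    intro hUz
    have hyz : y ≠ z := fun h => hyS (h ▸ T.le_refl y)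
    obtain ⟨F, hF⟩ := T.inf y z hyz
    have hunion : T.U y ∩ T.U z = ⋃ v ∈ (F : Set (SCarrier δ κ)), T.U v := by
      ext u
      simpa [SPoset.U] using hF u
    have hmem : (⋃ v ∈ (F : Set (SCarrier δ κ)), T.U v) ∈ f := by
      rw [← hunion]; exact f.inter_mem hyD.2 hUz
    obtain ⟨v, hvF, hvf⟩ := (Ultrafilter.finite_biUnion_mem_iff F.finite_toSet).mp hmem
    have hvy : T.le v y ∧ T.le v z := (hF v).mpr ⟨v, hvF, T.le_refl v⟩
    have hvney : v ≠ y := fun h => hyS (h ▸ hvy.2)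
    have hvD : v ∈ D := ⟨T.le_trans v y x hvy.1 hyD.1, hvf⟩
    exact ho v.1.1 ⟨v, hvD, rfl⟩ (hyo ▸ T.lt_levels v y hvy.1 hvney)

end Aux

/-- For an `s`-poset `T` (with `s` a sequence of infinite cardinals), the associated
space `X_T` is Hausdorff, every `U(x)` is compact and open, and `X_T` is locally
compact. -/
theorem sposet_space_hausdorff_locallyCompact (δ : Ordinal.{0})
    (κ : Ordinal.{0} → Cardinal.{0}) (hκ : ∀ α < δ, ℵ₀ ≤ κ α) (T : SPoset δ κ) :
    @T2Space _ T.topology ∧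
    (∀ x : SCarrier δ κ, @IsCompact _ T.topology (T.U x) ∧ @IsOpen _ T.topology (T.U x)) ∧
    @LocallyCompactSpace _ T.topology := by
  letI := T.topology
  have ht2 : T2Space (SCarrier δ κ) := by
    constructor
    intro x y hxy
    have : ¬ T.le y x ∨ ¬ T.le x y := by
      by_contra h
      push_neg at h
      exact hxy (T.le_antisymm x y h.2 h.1)
    rcases this with h | h
    · exact ⟨T.U x, (T.U x)ᶜ, T.isOpen_U x, T.isOpen_U_compl x, T.le_refl x, h,
        disjoint_compl_right⟩
    · exact ⟨(T.U y)ᶜ, T.U y, T.isOpen_U_compl y, T.isOpen_U y, h, T.le_refl y,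
        disjoint_compl_left⟩
  refine ⟨ht2, fun x => ⟨T.isCompact_U x, T.isOpen_U x⟩, ?_⟩
  have hw : WeaklyLocallyCompactSpace (SCarrier δ κ) :=
    ⟨fun x => ⟨T.U x, T.isCompact_U x, (T.isOpen_U x).mem_nhds (T.le_refl x)⟩⟩
  infer_instance
end

section
/- Let T = ⟨T,≺⟩ be a μ-skeleton (an s-poset with cardinal sequence ⟨κ⟩_μ⌢⟨λ⟩ all of whose levels T_γ for γ < μ are bone levels), let X_T be its associated topological space, let α < μ, and let x be a point in the (α+1)-th Cantor–Bendixson level of X_T. Then the tightness of x in X_T is ω; in fact every set A with x in its closure but not containing x contains a countable subset B converging to x. -/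
open Cardinal

/-- `T_γ` is a bone level: distinct points of level `γ` have no common lower bound
(`i{s,t} = ∅`), and every strict predecessor of a point of level `γ+1` factors
through level `γ`. -/
def SPoset.BoneLevel {δ : Ordinal.{0}} {κ : Ordinal.{0} → Cardinal.{0}}
    (T : SPoset δ κ) (γ : Ordinal.{0}) : Prop :=
  (∀ s t : SCarrier δ κ, s.1.1 = γ → t.1.1 = γ → s ≠ t →
      ∀ u, ¬ (T.le u s ∧ T.le u t)) ∧
  (∀ x : SCarrier δ κ, x.1.1 = γ + 1 → ∀ y, T.le y x → y ≠ x →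
      ∃ z : SCarrier δ κ, z.1.1 = γ ∧ T.le y z ∧ T.le z x ∧ z ≠ x)

/-- The `α`-th Cantor–Bendixson derivative of a topological space. -/
noncomputable def CBDeriv (X : Type 1) (tX : TopologicalSpace X) (o : Ordinal.{0}) :
    Set X :=
  Ordinal.limitRecOn o (Set.univ : Set X)
    (fun _ S => S \ {x | x ∈ S ∧ ∃ U : Set X, tX.IsOpen U ∧ U ∩ S = {x}})
    (fun o _ IH => ⋂ (β : Ordinal) (h : β < o), IH β h)

section Aux
variable {δ : Ordinal.{0}} {κf : Ordinal.{0} → Cardinal.{0}} (T : SPoset δ κf)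

lemma U_open (x : SCarrier δ κf) : T.topology.IsOpen (T.U x) :=
  TopologicalSpace.GenerateOpen.basic _ ⟨x, Or.inl rfl⟩

lemma Uc_open (x : SCarrier δ κf) : T.topology.IsOpen (T.U x)ᶜ :=
  TopologicalSpace.GenerateOpen.basic _ ⟨x, Or.inr rfl⟩

/-- The standard neighborhood-type sets. -/
def Nbhd (x : SCarrier δ κf) (Z : Finset (SCarrier δ κf)) : Set (SCarrier δ κf) :=
  {y | T.le y x ∧ ∀ z ∈ Z, ¬ T.le y z}

lemma Nbhd_open (x : SCarrier δ κf) (Z : Finset (SCarrier δ κf)) :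
    T.topology.IsOpen (Nbhd T x Z) := by
  letI := T.topology
  have h : Nbhd T x Z = T.U x ∩ ⋂ z ∈ Z, (T.U z)ᶜ := by
    ext y; simp [Nbhd, SPoset.U]
  rw [h]
  exact IsOpen.inter (U_open T x) (isOpen_biInter_finset fun z _ => Uc_open T z)

lemma mem_Nbhd_self (x : SCarrier δ κf) (Z : Finset (SCarrier δ κf))
    (hZ : ∀ z ∈ Z, ¬ T.le x z) : x ∈ Nbhd T x Z :=
  ⟨T.le_refl x, hZ⟩

/-- Every open set containing `x` contains a standard neighborhood of `x`. -/
lemma exists_nbhd_subset {O : Set (SCarrier δ κf)} (hO : T.topology.IsOpen O) :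
    ∀ x ∈ O, ∃ Z : Finset (SCarrier δ κf), (∀ z ∈ Z, ¬ T.le x z) ∧ Nbhd T x Z ⊆ O := by
  classical
  have hO' : TopologicalSpace.GenerateOpen {S | ∃ x, S = T.U x ∨ S = (T.U x)ᶜ} O := hO
  clear hO
  induction hO' with
  | basic s hs =>
    obtain ⟨w, hw | hw⟩ := hs
    · subst hw
      intro x hx
      exact ⟨∅, by simp, fun y hy => T.le_trans _ _ _ hy.1 hx⟩
    · subst hw
      intro x hx
      refine ⟨{w}, by simpa [SPoset.U] using hx, fun y hy => ?_⟩
      simpa [SPoset.U] using hy.2 w (Finset.mem_singleton_self w)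
  | univ => exact fun x _ => ⟨∅, by simp, Set.subset_univ _⟩
  | inter s t _ _ ihs iht =>
    intro x hx
    obtain ⟨Z1, hZ1, hsub1⟩ := ihs x hx.1
    obtain ⟨Z2, hZ2, hsub2⟩ := iht x hx.2
    refine ⟨Z1 ∪ Z2, ?_, fun y hy => ⟨hsub1 ⟨hy.1, fun z hz => hy.2 z (Finset.mem_union_left _ hz)⟩,
      hsub2 ⟨hy.1, fun z hz => hy.2 z (Finset.mem_union_right _ hz)⟩⟩⟩
    intro z hz
    rcases Finset.mem_union.1 hz with h | h
    exacts [hZ1 z h, hZ2 z h]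
  | sUnion S _ ih =>
    intro x hx
    obtain ⟨s, hsS, hxs⟩ := hx
    obtain ⟨Z, hZ, hsub⟩ := ih s hsS x hxs
    exact ⟨Z, hZ, hsub.trans (Set.subset_sUnion_of_mem hsS)⟩

end Aux


lemma CBDeriv_zero (X : Type 1) (tX : TopologicalSpace X) : CBDeriv X tX 0 = Set.univ := by
  unfold CBDeriv; rw [Ordinal.limitRecOn_zero]

lemma CBDeriv_succ (X : Type 1) (tX : TopologicalSpace X) (o : Ordinal) :
    CBDeriv X tX (Order.succ o) = CBDeriv X tX o \
      {x | x ∈ CBDeriv X tX o ∧ ∃ U : Set X, tX.IsOpen U ∧ U ∩ CBDeriv X tX o = {x}} := by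
  unfold CBDeriv; rw [Ordinal.limitRecOn_succ]

lemma CBDeriv_limit (X : Type 1) (tX : TopologicalSpace X) (o : Ordinal) (h : Order.IsSuccLimit o) :
    CBDeriv X tX o = ⋂ (β : Ordinal) (_ : β < o), CBDeriv X tX β := by
  unfold CBDeriv; rw [Ordinal.limitRecOn_limit _ _ _ _ h]

section Levels
variable {δ : Ordinal.{0}} {κf : Ordinal.{0} → Cardinal.{0}}

/-- Points of CB rank `β` have poset level at least `β`. -/
lemma CB_le_level (T : SPoset δ κf) (β : Ordinal) :
    CBDeriv _ T.topology β ⊆ {x : SCarrier δ κf | β ≤ x.1.1} := by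
  induction β using Ordinal.limitRecOn with
  | zero => intro x _; exact (zero_le : (0 : Ordinal) ≤ x.1.1)
  | add_one β ih =>
    rw [Ordinal.add_one_eq_succ]
    intro x hx
    rw [CBDeriv_succ] at hx
    obtain ⟨hxD, hnot⟩ := hx
    have hβ : β ≤ x.1.1 := ih hxD
    refine Order.succ_le_iff.mpr (lt_of_le_of_ne hβ ?_)
    intro heq
    apply hnot
    refine ⟨hxD, T.U x, U_open T x, ?_⟩
    ext y
    simp only [Set.mem_inter_iff, Set.mem_singleton_iff]
    constructor
    · rintro ⟨hyx, hyD⟩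
      by_contra hne
      have h1 := T.lt_levels y x hyx hne
      have h2 := ih hyD
      rw [← heq] at h1
      exact absurd (h2.trans_lt h1) (lt_irrefl β)
    · rintro rfl
      exact ⟨T.le_refl _, hxD⟩
  | limit β hβ ih =>
    intro x hx
    rw [CBDeriv_limit _ _ _ hβ] at hx
    by_contra h
    simp only [Set.mem_setOf_eq, not_le] at h
    have h2 : Order.succ x.1.1 < β := hβ.succ_lt h
    have h3 : Order.succ x.1.1 ≤ x.1.1 := ih _ h2 (Set.mem_iInter.1 (Set.mem_iInter.1 hx _) h2)
    exact absurd (Order.succ_le_iff.mp h3) (lt_irrefl _)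

end Levels

section Skeleton
variable {μ : Ordinal.{0}} {κf : Ordinal.{0} → Cardinal.{0}}

/-- Core lemma: below a point `x` of level `> β` in a skeleton one can find a point of
level `≥ β` avoiding finitely many prescribed `U(z)`'s (for `z` not above `x`). -/
lemma exists_avoid (T : SPoset (μ + 1) κf) (hskel : ∀ γ < μ, T.BoneLevel γ)
    (β : Ordinal) (x : SCarrier (μ + 1) κf) (hβx : β < x.1.1)
    (Z : Finset (SCarrier (μ + 1) κf)) (hZ : ∀ z ∈ Z, ¬ T.le x z) :
    ∃ y, T.le y x ∧ y ≠ x ∧ β ≤ y.1.1 ∧ ∀ z ∈ Z, ¬ T.le y z := by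
  classical
  have hne : ∀ z ∈ Z, x ≠ z := fun z hz h => hZ z hz (h ▸ T.le_refl x)
  set Ffun : SCarrier (μ + 1) κf → Finset (SCarrier (μ + 1) κf) :=
    fun z => if h : x ≠ z then (T.inf x z h).choose else ∅ with hFfun
  have hF : ∀ z, x ≠ z → ∀ u, (T.le u x ∧ T.le u z) ↔ ∃ v ∈ Ffun z, T.le u v := by
    intro z h u
    rw [hFfun]; simp only [dif_pos h]
    exact (T.inf x z h).choose_spec u
  set V : Finset (SCarrier (μ + 1) κf) := Z.biUnion Ffun with hVdef
  have hV : ∀ v ∈ V, T.le v x ∧ v ≠ x := by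
    intro v hv
    obtain ⟨z, hz, hvF⟩ := Finset.mem_biUnion.1 hv
    have h1 := (hF z (hne z hz) v).2 ⟨v, hvF, T.le_refl v⟩
    refine ⟨h1.1, ?_⟩
    rintro rfl
    exact hZ z hz h1.2
  have hcover : ∀ y, T.le y x → ∀ z ∈ Z, T.le y z → ∃ v ∈ V, T.le y v := by
    intro y hyx z hz hyz
    obtain ⟨v, hvF, hyv⟩ := (hF z (hne z hz) y).1 ⟨hyx, hyz⟩
    exact ⟨v, Finset.mem_biUnion.2 ⟨z, hz, hvF⟩, hyv⟩
  rcases Ordinal.zero_or_succ_or_isSuccLimit x.1.1 with h0 | ⟨η, hη⟩ | hlim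
  · exact absurd (h0 ▸ hβx) (not_lt_zero (a := β))
  · -- successor level
    replace hη := hη.symm
    have hxlev : x.1.1 = η + 1 := by rw [hη, Ordinal.add_one_eq_succ]
    have hημ : η < μ := by
      have h1 : Order.succ η < Order.succ μ := by
        rw [← hη, ← Ordinal.add_one_eq_succ]; exact x.2.1
      exact Order.succ_lt_succ_iff.mp h1
    obtain ⟨hb1, hb2⟩ := hskel η hημ
    have hP := T.pred_infinite η x.1.1 (by rw [hη]; exact Order.lt_succ η) x.2.1 x rfl
    set g : SCarrier (μ + 1) κf → SCarrier (μ + 1) κf := fun v =>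
      if h : T.le v x ∧ v ≠ x then (hb2 x hxlev v h.1 h.2).choose else v with hgdef
    have hg : ∀ v, T.le v x → v ≠ x →
        (g v).1.1 = η ∧ T.le v (g v) ∧ T.le (g v) x ∧ g v ≠ x := by
      intro v h1 h2
      rw [hgdef]; simp only [dif_pos (And.intro h1 h2)]
      exact (hb2 x hxlev v h1 h2).choose_spec
    obtain ⟨y, hyP, hynot⟩ := hP.exists_notMem_finset (V.image g)
    refine ⟨y, hyP.2.1, hyP.2.2, ?_, ?_⟩
    · rw [hyP.1]
      rw [hη] at hβx
      exact Order.lt_succ_iff.mp hβx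
    · intro z hz hyz
      obtain ⟨v, hvV, hyv⟩ := hcover y hyP.2.1 z hz hyz
      obtain ⟨hv1, hv2⟩ := hV v hvV
      obtain ⟨hgl, hvg, _, _⟩ := hg v hv1 hv2
      have hle_yg : T.le y (g v) := T.le_trans _ _ _ hyv hvg
      by_cases hygv : y = g v
      · exact hynot (by rw [hygv]; exact Finset.mem_image_of_mem g hvV)
      · exact hb1 y (g v) hyP.1 hgl hygv y ⟨T.le_refl y, hle_yg⟩
  · -- limit level
    set β' := max β (V.sup fun v => v.1.1 + 1) with hβ'def
    have hβ' : β' < x.1.1 := by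
      apply max_lt hβx
      refine Finset.sup_lt_iff (lt_of_le_of_lt (zero_le (a := β)) hβx) |>.2 ?_
      intro v hv
      have h4 := hlim.succ_lt (T.lt_levels v x (hV v hv).1 (hV v hv).2)
      rw [← Ordinal.add_one_eq_succ] at h4
      exact h4
    obtain ⟨y, hy⟩ := (T.pred_infinite β' x.1.1 hβ' x.2.1 x rfl).nonempty
    refine ⟨y, hy.2.1, hy.2.2, ?_, ?_⟩
    · rw [hy.1]; exact le_max_left _ _
    · intro z hz hyz
      obtain ⟨v, hvV, hyv⟩ := hcover y hy.2.1 z hz hyz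
      have hvβ' : v.1.1 < β' := by
        have h1 : v.1.1 + 1 ≤ V.sup fun v => v.1.1 + 1 := Finset.le_sup (f := fun v : SCarrier (μ + 1) κf => v.1.1 + 1) hvV
        have h2 : v.1.1 < v.1.1 + 1 := by
          have := Order.lt_succ v.1.1
          rw [← Ordinal.add_one_eq_succ] at this
          exact this
        exact h2.trans_le (h1.trans (le_max_right _ _))
      by_cases h : y = v
      · rw [h] at hy; rw [hy.1] at hvβ'; exact absurd hvβ' (lt_irrefl _)
      · have h3 := T.lt_levels y v hyv h
        rw [hy.1] at h3
        exact absurd h3 (not_lt.2 hvβ'.le)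

end Skeleton

/-- Points of poset level at least `β` have CB rank at least `β` in a skeleton. -/
lemma level_le_CB (T : SPoset (μ + 1) κf) (hskel : ∀ γ < μ, T.BoneLevel γ) (β : Ordinal) :
    ∀ x : SCarrier (μ + 1) κf, β ≤ x.1.1 → x ∈ CBDeriv _ T.topology β := by
  induction β using Ordinal.limitRecOn with
  | zero => intro x _; rw [CBDeriv_zero]; trivial
  | add_one β ih =>
    intro x hx
    rw [Ordinal.add_one_eq_succ β] at hx ⊢
    rw [CBDeriv_succ]
    have hxD := ih x ((Order.le_succ β).trans hx)
    refine ⟨hxD, ?_⟩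
    rintro ⟨-, U, hU, hUD⟩
    have hxU : x ∈ U := by
      have h1 : x ∈ U ∩ CBDeriv _ T.topology β := by rw [hUD]; rfl
      exact h1.1
    obtain ⟨Z, hZ, hsub⟩ := exists_nbhd_subset T hU x hxU
    have hβx : β < x.1.1 := Order.succ_le_iff.mp hx
    obtain ⟨y, hyx, hyne, hylev, hyZ⟩ := exists_avoid T hskel β x hβx Z hZ
    have h2 : y ∈ U ∩ CBDeriv _ T.topology β := ⟨hsub ⟨hyx, hyZ⟩, ih y hylev⟩
    rw [hUD] at h2
    exact hyne h2
  | limit β hβ ih =>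
    intro x hx
    rw [CBDeriv_limit _ _ _ hβ]
    exact Set.mem_iInter.2 fun β' => Set.mem_iInter.2 fun hβ' => ih β' hβ' x (hβ'.le.trans hx)


/-- Let `T` be a `μ`-skeleton, i.e. an `s`-poset for `s = ⟨κ⟩_μ ⌢ ⟨lam⟩` all of whose
levels below `μ` are bone levels. If `α < μ` and `x` lies on the `(α+1)`-st
Cantor–Bendixson level of the associated space `X_T`, then the tightness of `x` in
`X_T` is `ω`: every set `A` with `x ∈ cl A \ A` contains a countable subset `B`
converging to `x`. -/
theorem skeleton_tightness (κ lam : Cardinal.{0}) (μ : Ordinal.{0})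
    (hκ : ℵ₀ ≤ κ) (hκlam : κ < lam) (hμ : 0 < μ)
    (T : SPoset (μ + 1) (fun α => if α < μ then κ else lam))
    (hskel : ∀ γ < μ, T.BoneLevel γ)
    (α : Ordinal.{0}) (hα : α < μ)
    (x : SCarrier (μ + 1) (fun α => if α < μ then κ else lam))
    (hx : x ∈ CBDeriv _ T.topology (α + 1) \ CBDeriv _ T.topology (α + 1 + 1)) :
    ∀ A : Set (SCarrier (μ + 1) (fun α => if α < μ then κ else lam)),
      x ∈ @closure _ T.topology A → x ∉ A →
      ∃ B ⊆ A, B.Countable ∧ x ∈ @closure _ T.topology B ∧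
        ∀ U ∈ @nhds _ T.topology x, (B \ U).Finite := by
  classical
  letI := T.topology
  intro A hclA hxA
  -- Step 1: the poset level of `x` is exactly `α + 1`.
  have h1 : α + 1 ≤ x.1.1 := CB_le_level T (α + 1) hx.1
  have h2 : ¬ (α + 1 + 1 ≤ x.1.1) := fun h => hx.2 (level_le_CB T hskel (α + 1 + 1) x h)
  have hξ : x.1.1 = α + 1 := by
    refine le_antisymm ?_ h1
    have h3 : x.1.1 < α + 1 + 1 := not_le.mp h2
    rw [Ordinal.add_one_eq_succ (α + 1)] at h3
    exact Order.lt_succ_iff.mp h3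
  obtain ⟨hb1, hb2⟩ := hskel α hα
  -- the canonical level-α point above each strict predecessor of x
  set zfun : SCarrier (μ + 1) (fun α => if α < μ then κ else lam) →
      SCarrier (μ + 1) (fun α => if α < μ then κ else lam) :=
    fun a => if h : T.le a x ∧ a ≠ x then (hb2 x hξ a h.1 h.2).choose else a with hzdef
  have hzfun : ∀ a, T.le a x → a ≠ x →
      (zfun a).1.1 = α ∧ T.le a (zfun a) ∧ T.le (zfun a) x ∧ zfun a ≠ x := by
    intro a ha1 ha2
    rw [hzdef]; simp only [dif_pos (And.intro ha1 ha2)]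
    exact (hb2 x hξ a ha1 ha2).choose_spec
  -- choice of points of A avoiding finitely many obstacles
  have hQ : ∀ W : Finset (SCarrier (μ + 1) (fun α => if α < μ then κ else lam)),
      ∃ a, a ∈ A ∧ T.le a x ∧ a ≠ x ∧ ∀ w ∈ W, T.le w x → w ≠ x → ¬ T.le a w := by
    intro W
    set W' := W.filter (fun w => T.le w x ∧ w ≠ x) with hW'
    have hxW' : ∀ w ∈ W', ¬ T.le x w := by
      intro w hw hle
      obtain ⟨-, hw1, hw2⟩ := Finset.mem_filter.1 hw
      exact hw2 (T.le_antisymm _ _ hw1 hle)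
    obtain ⟨a, haN, haA⟩ := mem_closure_iff.1 hclA _ (Nbhd_open T x W') (mem_Nbhd_self T x W' hxW')
    refine ⟨a, haA, haN.1, fun h => hxA (h ▸ haA), ?_⟩
    intro w hw hw1 hw2
    exact haN.2 w (Finset.mem_filter.2 ⟨hw, hw1, hw2⟩)
  choose nextf hnA hnle hnne hnavoid using hQ
  -- the recursively constructed sequence
  set W : ℕ → Finset (SCarrier (μ + 1) (fun α => if α < μ then κ else lam)) :=
    fun n => Nat.rec ∅ (fun _ Wn => Wn ∪ {zfun (nextf Wn)}) n with hWdef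
  set a : ℕ → SCarrier (μ + 1) (fun α => if α < μ then κ else lam) :=
    fun n => nextf (W n) with hadef
  have hWsucc : ∀ n, W (n + 1) = W n ∪ {zfun (a n)} := fun n => rfl
  have hz : ∀ n, (zfun (a n)).1.1 = α ∧ T.le (a n) (zfun (a n)) ∧
      T.le (zfun (a n)) x ∧ zfun (a n) ≠ x := fun n => hzfun (a n) (hnle _) (hnne _)
  have hWmono : ∀ n m, n ≤ m → W n ⊆ W m := by
    intro n m h
    induction m, h using Nat.le_induction with
    | base => exact subset_rfl
    | succ m _ ih => rw [hWsucc m]; exact ih.trans Finset.subset_union_left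
  have hmemW : ∀ n m, n < m → zfun (a n) ∈ W m := by
    intro n m h
    refine hWmono (n + 1) m h ?_
    rw [hWsucc n]
    exact Finset.mem_union_right _ (Finset.mem_singleton_self _)
  have hdist : ∀ n m, n < m → ¬ T.le (a m) (zfun (a n)) := by
    intro n m h
    exact hnavoid (W m) (zfun (a n)) (hmemW n m h) (hz n).2.2.1 (hz n).2.2.2
  have hainj : Function.Injective a := by
    intro n m he
    by_contra hne
    rcases lt_or_gt_of_ne hne with h | h
    · exact hdist n m h (he ▸ (hz n).2.1)
    · exact hdist m n h (he ▸ (hz m).2.1)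
  -- the key finiteness property
  have hfinkey : ∀ z, ¬ T.le x z → {n : ℕ | T.le (a n) z}.Finite := by
    intro z hxz
    have hxzne : x ≠ z := fun h => hxz (h ▸ T.le_refl x)
    obtain ⟨F, hFspec⟩ := T.inf x z hxzne
    set v : ℕ → SCarrier (μ + 1) (fun α => if α < μ then κ else lam) :=
      fun n => if h : T.le (a n) z then ((hFspec (a n)).1 ⟨hnle _, h⟩).choose else x with hvdef
    have hv : ∀ n, T.le (a n) z → v n ∈ F ∧ T.le (a n) (v n) := by
      intro n h
      rw [hvdef]; simp only [dif_pos h]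
      exact ((hFspec (a n)).1 ⟨hnle _, h⟩).choose_spec
    have hvx : ∀ n, T.le (a n) z → T.le (v n) x ∧ v n ≠ x := by
      intro n h
      have h2 := (hFspec (v n)).2 ⟨v n, (hv n h).1, T.le_refl _⟩
      exact ⟨h2.1, fun he => hxz (he ▸ h2.2)⟩
    have hkey : ∀ n, T.le (a n) z → zfun (v n) = zfun (a n) := by
      intro n h
      obtain ⟨hva, hvb⟩ := hvx n h
      obtain ⟨hl1, hl2, hl3, hl4⟩ := hzfun (v n) hva hvb
      by_contra hne
      exact hb1 _ _ hl1 (hz n).1 hne (a n)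
        ⟨T.le_trans _ _ _ (hv n h).2 hl2, (hz n).2.1⟩
    have hinj : Set.InjOn v {n : ℕ | T.le (a n) z} := by
      intro n hn m hm he
      by_contra hnm
      have heq : zfun (a n) = zfun (a m) := by
        rw [← hkey n hn, he, hkey m hm]
      rcases lt_or_gt_of_ne hnm with h | h
      · exact hdist n m h (heq ▸ (hz m).2.1)
      · exact hdist m n h (heq.symm ▸ (hz n).2.1)
    refine Set.Finite.of_finite_image ?_ hinj
    refine Set.Finite.subset F.finite_toSet ?_
    rintro _ ⟨n, hn, rfl⟩
    exact (hv n hn).1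
  set B : Set (SCarrier (μ + 1) (fun α => if α < μ then κ else lam)) := Set.range a with hBdef
  have hBdiff : ∀ Z : Finset (SCarrier (μ + 1) (fun α => if α < μ then κ else lam)),
      (∀ z ∈ Z, ¬ T.le x z) → (B \ Nbhd T x Z).Finite := by
    intro Z hZ
    have hsubset : B \ Nbhd T x Z ⊆ ⋃ z ∈ Z, (a '' {n : ℕ | T.le (a n) z}) := by
      rintro b ⟨⟨n, rfl⟩, hbN⟩
      have h3 : ∃ z ∈ Z, T.le (a n) z := by
        by_contra hc
        push_neg at hc
        exact hbN ⟨hnle _, hc⟩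
      obtain ⟨z, hz', hlz⟩ := h3
      exact Set.mem_biUnion hz' ⟨n, hlz, rfl⟩
    exact Set.Finite.subset
      (Set.Finite.biUnion Z.finite_toSet fun z hz' => (hfinkey z (hZ z hz')).image a) hsubset
  refine ⟨B, ?_, Set.countable_range a, ?_, ?_⟩
  · rintro _ ⟨n, rfl⟩; exact hnA _
  · rw [mem_closure_iff]
    intro O hO hxO
    obtain ⟨Z, hZ, hsub⟩ := exists_nbhd_subset T hO x hxO
    have hBinf : B.Infinite := Set.infinite_range_of_injective hainj
    have hne : (B ∩ Nbhd T x Z).Nonempty := by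
      by_contra hc
      rw [Set.not_nonempty_iff_eq_empty] at hc
      have : B ⊆ B \ Nbhd T x Z := by
        intro b hb
        refine ⟨hb, fun hbN => ?_⟩
        exact Set.eq_empty_iff_forall_notMem.1 hc b ⟨hb, hbN⟩
      exact hBinf (Set.Finite.subset (hBdiff Z hZ) this)
    obtain ⟨b, hbB, hbN⟩ := hne
    exact ⟨b, hsub hbN, hbB⟩
  · intro U hU
    obtain ⟨O, hOU, hO, hxO⟩ := mem_nhds_iff.1 hU
    obtain ⟨Z, hZ, hsub⟩ := exists_nbhd_subset T hO x hxO
    refine Set.Finite.subset (hBdiff Z hZ) ?_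
    rintro b ⟨hbB, hbU⟩
    exact ⟨hbB, fun hbN => hbU (hOU (hsub hbN))⟩
end

section
/- With the tree of intervals 𝕀_η on [0,η), for every ordinal α < η there is an interval I ∈ 𝕀_η with I⁻ = α (i.e., whose left endpoint is exactly α). -/
open scoped Classical
open Cardinal

/-- The tree of intervals `𝕀_η = ⋃_n 𝒥_n` on `[0,η)`:  `𝒥_0 = {[0,η)}`; an interval
`I = [a,b)` with `b` limit is partitioned into the consecutive intervals
`[ε^I_ν, ε^I_{ν+1})`, `ν < cf(b)`, determined by a fixed closed cofinal subset
`E(I) = {ε^I_ν : ν < cf(b)}` of `I` of order type `cf(b)` with `ε^I_0 = a`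
(here `ε^I = eps I` is its increasing continuous enumeration);  an interval
`I = [a, b'+1)` is partitioned into `[a,b')` and `{b'} = [b', b'+1)`.
An interval `[a,b)` is coded by the pair `(a,b)`. -/
structure IntervalTree (η : Ordinal.{0}) : Type 1 where
  J : ℕ → Set (Ordinal × Ordinal)
  eps : Ordinal × Ordinal → Ordinal → Ordinal
  zero_eq : J 0 = {((0 : Ordinal), η)}
  lt_of_mem : ∀ n p, p ∈ J n → p.1 < p.2 ∧ p.2 ≤ η
  eps_zero : ∀ n p, p ∈ J n → Order.IsSuccLimit p.2 → eps p 0 = p.1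
  eps_strictMono : ∀ n p, p ∈ J n → Order.IsSuccLimit p.2 →
    ∀ ν ξ : Ordinal, ν < ξ → ξ < (Ordinal.cof p.2).ord → eps p ν < eps p ξ
  eps_lt : ∀ n p, p ∈ J n → Order.IsSuccLimit p.2 →
    ∀ ν < (Ordinal.cof p.2).ord, eps p ν < p.2
  eps_cofinal : ∀ n p, p ∈ J n → Order.IsSuccLimit p.2 →
    ∀ β < p.2, ∃ ν < (Ordinal.cof p.2).ord, β ≤ eps p ν
  eps_cont : ∀ n p, p ∈ J n → Order.IsSuccLimit p.2 →
    ∀ ν, ν < (Ordinal.cof p.2).ord → Order.IsSuccLimit ν →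
      eps p ν = sSup (eps p '' Set.Iio ν)
  succ_eq : ∀ n, J (n + 1) = {q | ∃ p ∈ J n,
    (Order.IsSuccLimit p.2 ∧ ∃ ν < (Ordinal.cof p.2).ord, q = (eps p ν, eps p (ν + 1))) ∨
    (∃ β' : Ordinal, p.2 = β' + 1 ∧ (q = (β', p.2) ∨ (p.1 < β' ∧ q = (p.1, β'))))}

/-- Membership in the tree of intervals `𝕀_η`. -/
def IntervalTree.memT {η : Ordinal.{0}} (T : IntervalTree η) (p : Ordinal × Ordinal) :
    Prop :=
  ∃ n, p ∈ T.J n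

/-- `E(I)`: the distinguished closed cofinal subset of the interval `I`. -/
noncomputable def IntervalTree.Eset {η : Ordinal.{0}} (T : IntervalTree η)
    (p : Ordinal × Ordinal) : Set Ordinal :=
  if Order.IsSuccLimit p.2 then T.eps p '' Set.Iio (Ordinal.cof p.2).ord
  else {x | x = p.1 ∨ x + 1 = p.2}

/-- `I(α,n)`: the (unique) interval of `𝒥_n` containing `α` (junk value if none). -/
noncomputable def IntervalTree.Iat {η : Ordinal.{0}} (T : IntervalTree η)
    (α : Ordinal.{0}) (n : ℕ) : Ordinal × Ordinal :=
  if h : ∃ p, p ∈ T.J n ∧ α ∈ Set.Ico p.1 p.2 then h.choose else (0, 0)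

/-- `n(α)`: the least `n` such that some interval of `𝒥_n` has left endpoint `α`. -/
noncomputable def IntervalTree.nAt {η : Ordinal.{0}} (T : IntervalTree η)
    (α : Ordinal.{0}) : ℕ :=
  sInf {n | (T.Iat α n).1 = α}

/-- The orbit `o(α) = ⋃_{m < n(α)} (E(I(α,m)) ∩ α)`. -/
noncomputable def IntervalTree.orbit {η : Ordinal.{0}} (T : IntervalTree η)
    (α : Ordinal.{0}) : Set Ordinal :=
  ⋃ m ∈ Set.Iio (T.nAt α), T.Eset (T.Iat α m) ∩ Set.Iio α

/-- For every `α < η` there is an interval of `𝕀_η` whose left endpoint is exactly `α`. -/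
theorem intervalTree_exists_left_endpoint (η : Ordinal.{0}) (T : IntervalTree η)
    (α : Ordinal.{0}) (hα : α < η) :
    ∃ p : Ordinal × Ordinal, T.memT p ∧ p.1 = α := by
  have main : ∀ β : Ordinal, ∀ n p, p ∈ T.J n → p.2 = β → α ∈ Set.Ico p.1 p.2 →
      ∃ q : Ordinal × Ordinal, T.memT q ∧ q.1 = α := by
    intro β
    induction β using Ordinal.induction with
    | h β IH =>
      intro n p hp hβ hmem
      obtain ⟨h1, h2⟩ := hmem
      rcases Ordinal.zero_or_succ_or_isSuccLimit p.2 with h0 | ⟨β', hs⟩ | hlim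
      · exact absurd (h0 ▸ h2) (not_lt_zero (a := α))
      · -- successor case
        have hs' : p.2 = β' + 1 := by rw [Ordinal.add_one_eq_succ]; exact hs.symm
        have hαβ' : α ≤ β' := Order.lt_succ_iff.mp (hs ▸ h2)
        rcases eq_or_lt_of_le hαβ' with heq | hlt
        · refine ⟨(β', p.2), ⟨n + 1, ?_⟩, heq.symm⟩
          rw [T.succ_eq]
          exact ⟨p, hp, Or.inr ⟨β', hs', Or.inl rfl⟩⟩
        · have hp1 : p.1 < β' := lt_of_le_of_lt h1 hlt
          have hq : (p.1, β') ∈ T.J (n + 1) := by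
            rw [T.succ_eq]
            exact ⟨p, hp, Or.inr ⟨β', hs', Or.inr ⟨hp1, rfl⟩⟩⟩
          have hβ'β : β' < β := by
            rw [← hβ, hs']
            exact lt_add_one β'
          exact IH β' hβ'β (n + 1) (p.1, β') hq rfl ⟨h1, hlt⟩
      · -- limit case
        set c := (Ordinal.cof p.2).ord with hc
        have he0 : T.eps p 0 = p.1 := T.eps_zero n p hp hlim
        have hsucc : α + 1 < p.2 := by
          have := hlim.succ_lt h2
          rwa [← Ordinal.add_one_eq_succ] at this
        obtain ⟨ν0, hν0c, hν0⟩ := T.eps_cofinal n p hp hlim (α + 1) hsucc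
        have hαν0 : α < T.eps p ν0 := lt_of_lt_of_le (lt_add_one α) hν0
        set S : Set Ordinal := {ν | ν < c ∧ α < T.eps p ν} with hS
        have hSne : S.Nonempty := ⟨ν0, hν0c, hαν0⟩
        have hμ0 : sInf S ∈ S := csInf_mem hSne
        set μ0 := sInf S with hμ0def
        have hmin : ∀ ξ, ξ < μ0 → ξ < c → T.eps p ξ ≤ α := by
          intro ξ hξ hξc
          by_contra h
          push_neg at h
          exact absurd (csInf_le' (show ξ ∈ S from ⟨hξc, h⟩)) (not_le.mpr hξ)
        have hμ0ne : μ0 ≠ 0 := by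
          intro h
          have := hμ0.2
          rw [h, he0] at this
          exact absurd h1 (not_le.mpr this)
        have hμ0nl : ¬ Order.IsSuccLimit μ0 := by
          intro hl
          have hcont := T.eps_cont n p hp hlim μ0 hμ0.1 hl
          have hle : sSup (T.eps p '' Set.Iio μ0) ≤ α := by
            apply csSup_le
            · exact ⟨T.eps p 0, Set.mem_image_of_mem _ hl.pos⟩
            · rintro b ⟨ξ, hξ, rfl⟩
              exact hmin ξ hξ (lt_trans hξ hμ0.1)
          exact absurd hle (not_le.mpr (hcont ▸ hμ0.2))
        obtain ⟨μ, hμ⟩ : ∃ μ, μ0 = μ + 1 := by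
          rcases Ordinal.zero_or_succ_or_isSuccLimit μ0 with h | h | h
          · exact absurd h hμ0ne
          · obtain ⟨μ, hμ⟩ := h; exact ⟨μ, by rw [Ordinal.add_one_eq_succ, hμ]⟩
          · exact absurd h hμ0nl
        have hμc : μ + 1 < c := hμ ▸ hμ0.1
        have hμc' : μ < c := lt_trans (lt_add_one μ) hμc
        have hle : T.eps p μ ≤ α := hmin μ (hμ ▸ lt_add_one μ) hμc'
        have hlt : α < T.eps p (μ + 1) := hμ ▸ hμ0.2
        have hq : (T.eps p μ, T.eps p (μ + 1)) ∈ T.J (n + 1) := by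
          rw [T.succ_eq]
          exact ⟨p, hp, Or.inl ⟨hlim, μ, hμc', rfl⟩⟩
        have hlt2 : T.eps p (μ + 1) < β := hβ ▸ T.eps_lt n p hp hlim (μ + 1) hμc
        exact IH (T.eps p (μ + 1)) hlt2 (n + 1) (T.eps p μ, T.eps p (μ + 1)) hq rfl ⟨hle, hlt⟩
  have h0 : ((0 : Ordinal), η) ∈ T.J 0 := by rw [T.zero_eq]; rfl
  exact main η 0 ((0 : Ordinal), η) h0 rfl ⟨zero_le (a := α), hα⟩
end

section
/- For the tree of intervals 𝕀_η: for every α < η, the orbit o(α) has cardinality at most κ. -/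
open scoped Classical
open Cardinal

private lemma mk_biUnion_nat_le {c : Cardinal.{1}} (hc : ℵ₀ ≤ c)
    (S : ℕ → Set Ordinal.{0}) (n : ℕ) (h : ∀ m, #(S m) ≤ c) :
    #(⋃ m ∈ Set.Iio n, S m) ≤ c := by
  induction n with
  | zero =>
    have : Set.Iio (0 : ℕ) = ∅ := by ext m; simp
    simp [this]
  | succ n ih =>
    have hins : Set.Iio (n + 1) = insert n (Set.Iio n) := by
      ext m; simp [Nat.lt_succ_iff_lt_or_eq]
    rw [hins, Set.biUnion_insert]
    calc #((S n ∪ ⋃ m ∈ Set.Iio n, S m : Set Ordinal)) ≤ #(S n) + #((⋃ m ∈ Set.Iio n, S m : Set Ordinal)) :=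
          Cardinal.mk_union_le _ _
      _ ≤ c + c := add_le_add (h n) ih
      _ = c := Cardinal.add_eq_self hc

/-- For every `α < η`, the orbit `o(α)` with respect to `𝕀_η` has cardinality at
most `κ`. -/
theorem orbit_card_le (κ : Cardinal.{0}) (hκ : ℵ₀ ≤ κ) (η : Ordinal.{0})
    (hη₁ : (Order.succ κ).ord ≤ η) (hη₂ : η < (Order.succ (Order.succ κ)).ord)
    (hcof : Ordinal.cof η = Order.succ κ) (T : IntervalTree η) :
    ∀ α < η, #(T.orbit α) ≤ Cardinal.lift.{1} κ := by
  intro α hα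
  have hκ' : (ℵ₀ : Cardinal.{1}) ≤ Cardinal.lift.{1} κ := by
    rw [← Cardinal.lift_aleph0.{1,0}]; exact Cardinal.lift_le.mpr hκ
  -- cardinality of η is at most κ⁺
  have hηcard : η.card ≤ Order.succ κ := by
    have := (Cardinal.lt_ord).mp hη₂
    exact Order.lt_succ_iff.mp this
  refine mk_biUnion_nat_le hκ' _ _ ?_
  intro m
  set p := T.Iat α m with hp
  -- finite case helper
  have hfin : ¬ Order.IsSuccLimit p.2 → #(T.Eset p ∩ Set.Iio α : Set Ordinal) ≤ Cardinal.lift.{1} κ := by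
    intro hnl
    have hsub' : T.Eset p ∩ Set.Iio α ⊆ insert p.1 {x | x + 1 = p.2} := by
      intro x hx
      have := hx.1
      rw [IntervalTree.Eset, if_neg hnl] at this
      rcases this with h1 | h2
      · exact Or.inl h1
      · exact Or.inr h2
    have hss : ({x | x + 1 = p.2} : Set Ordinal).Subsingleton := by
      intro x hx y hy
      have : x + 1 = y + 1 := by rw [hx, hy]
      exact by simpa using this
    have hfin2 : (insert p.1 {x | x + 1 = p.2} : Set Ordinal).Finite :=
      Set.Finite.insert _ (Set.Subsingleton.finite hss)
    have : (T.Eset p ∩ Set.Iio α : Set Ordinal).Finite := hfin2.subset hsub'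
    exact le_trans (le_of_lt this.lt_aleph0) hκ'
  by_cases hex : ∃ q, q ∈ T.J m ∧ α ∈ Set.Ico q.1 q.2
  · have hpdef : p = hex.choose := by rw [hp, IntervalTree.Iat, dif_pos hex]
    obtain ⟨hpJ, hpIco⟩ : p ∈ T.J m ∧ α ∈ Set.Ico p.1 p.2 := hpdef ▸ hex.choose_spec
    by_cases hl : Order.IsSuccLimit p.2
    · -- limit case
      obtain ⟨ν₀, hν₀, hαν₀⟩ := T.eps_cofinal m p hpJ hl α hpIco.2
      have hsub : T.Eset p ∩ Set.Iio α ⊆ T.eps p '' Set.Iio ν₀ := by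
        rintro x ⟨hxE, hxα⟩
        rw [IntervalTree.Eset, if_pos hl] at hxE
        obtain ⟨ν, hν, rfl⟩ := hxE
        refine ⟨ν, ?_, rfl⟩
        by_contra hge
        simp only [Set.mem_Iio, not_lt] at hge
        rcases lt_or_eq_of_le hge with hlt | heq
        · exact absurd (lt_of_le_of_lt hαν₀ (T.eps_strictMono m p hpJ hl ν₀ ν hlt hν))
            (not_lt.mpr (le_of_lt hxα))
        · rw [heq] at hαν₀
          exact absurd hαν₀ (not_le.mpr hxα)
      have hcard : #(Set.Iio ν₀ : Set Ordinal) ≤ Cardinal.lift.{1} κ := by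
        rw [Ordinal.mk_Iio_ordinal]
        refine Cardinal.lift_le.mpr ?_
        have h1 : Ordinal.cof p.2 ≤ Order.succ κ :=
          le_trans (Ordinal.cof_le_card _)
            (le_trans (Ordinal.card_le_card (T.lt_of_mem m p hpJ).2) hηcard)
        have h2 : ν₀ < (Order.succ κ).ord :=
          lt_of_lt_of_le hν₀ (Cardinal.ord_le_ord.mpr h1)
        exact Order.lt_succ_iff.mp (Cardinal.lt_ord.mp h2)
      calc #(T.Eset p ∩ Set.Iio α : Set Ordinal) ≤ #(T.eps p '' Set.Iio ν₀) :=
            Cardinal.mk_le_mk_of_subset hsub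
        _ ≤ #(Set.Iio ν₀ : Set Ordinal) := Cardinal.mk_image_le
        _ ≤ Cardinal.lift.{1} κ := hcard
    · exact hfin hl
  · have hpdef : p = (0, 0) := by rw [hp, IntervalTree.Iat, dif_neg hex]
    refine hfin ?_
    rw [hpdef]
    exact fun h => h.1 isMin_bot
end

section
/- Let λ ≥ ω_3 and let F : [λ]² → ω_1 be an ω_1-strongly unbounded function. Define the forcing P whose conditions are triples ⟨X,⪯,i⟩ where X is a finite subset of T = (⋃_{α<ω_1}{α}×ω) ∪ ({ω_1}×λ), ⪯ is a partial order on X with s ≺ t implying π(s) < π(t), i : [X]² → [X]^{<ω} is an infimum function, i-values of top-level pairs {s,t} ⊆ X ∩ T_{ω_1} have levels in F{ξ(s),ξ(t)}, same-level pairs below ω_1 have empty infimum set, and successor-level covers exist (conditions (P1)–(P6)); ordered by end-extension. Then P satisfies the countable chain condition. -/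
open Cardinal

/-- The underlying set `T = (⋃_{α<ω₁} {α}×ω) ∪ ({ω₁}×λ)`, as a set of pairs of
ordinals; the first coordinate is the level `π(s)`, the second is `ξ(s)`. -/
def TTset (lam : Cardinal.{0}) : Set (Ordinal × Ordinal) :=
  {p | (p.1 < (Cardinal.aleph 1).ord ∧ p.2 < (Cardinal.aleph 0).ord) ∨
       (p.1 = (Cardinal.aleph 1).ord ∧ p.2 < lam.ord)}

/-- `F : [λ]² → ω₁` is an `ω₁`-strongly unbounded function on `λ`: for every
`δ < ω₁`, every `n < ω` and every family `A` of `ω₁` many pairwise disjoint subsets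
of `λ` of size `n`, there are distinct `a, b ∈ A` with `F{α,β} > δ` for all
`α ∈ a`, `β ∈ b`. -/
def StronglyUnbounded (lam : Cardinal.{0}) (F : Ordinal → Ordinal → Ordinal) : Prop :=
  ∀ δ < (Cardinal.aleph 1).ord, ∀ n : ℕ, ∀ A : Set (Set Ordinal),
    (∀ a ∈ A, a ⊆ Set.Iio lam.ord ∧ a.Finite ∧ a.ncard = n) →
    A.PairwiseDisjoint id → #A = Cardinal.aleph 1 →
    ∃ a ∈ A, ∃ b ∈ A, a ≠ b ∧ ∀ α ∈ a, ∀ β ∈ b, δ < F α β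

/-- A forcing condition `p = ⟨X, ⪯, i⟩` of the poset `P` adding an
`⟨ω⟩_{ω₁} ⌢ ⟨λ⟩`-poset:  `X` is a finite subset of `T`,  `⪯` is a partial order on
`X` strictly increasing on levels (P1)–(P2),  `i : [X]² → [X]^{<ω}` is an infimum
function (P3),  infima of top-level pairs have levels bounded by `F` (P4),
same-level pairs below `ω₁` have empty infimum set (P5), and successor-level
covers exist (P6). -/
structure Cond (lam : Cardinal.{0}) (F : Ordinal.{0} → Ordinal.{0} → Ordinal.{0}) : Type 2 where
  X : Set (Ordinal × Ordinal)
  finite : X.Finite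
  subT : X ⊆ TTset lam
  le : (Ordinal × Ordinal) → (Ordinal × Ordinal) → Prop
  le_refl : ∀ s ∈ X, le s s
  le_antisymm : ∀ s ∈ X, ∀ t ∈ X, le s t → le t s → s = t
  le_trans : ∀ s ∈ X, ∀ t ∈ X, ∀ u ∈ X, le s t → le t u → le s u
  lt_levels : ∀ s ∈ X, ∀ t ∈ X, le s t → s ≠ t → s.1 < t.1
  i : (Ordinal × Ordinal) → (Ordinal × Ordinal) → Set (Ordinal × Ordinal)
  i_symm : ∀ s t, i s t = i t s
  i_sub : ∀ s ∈ X, ∀ t ∈ X, s ≠ t → i s t ⊆ X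
  i_spec : ∀ s ∈ X, ∀ t ∈ X, s ≠ t →
    ∀ u ∈ X, (le u s ∧ le u t) ↔ ∃ v ∈ i s t, le u v
  P4 : ∀ s ∈ X, ∀ t ∈ X, s ≠ t → s.1 = (Cardinal.aleph 1).ord →
    t.1 = (Cardinal.aleph 1).ord → ∀ v ∈ i s t, v.1 < F s.2 t.2
  P5 : ∀ s ∈ X, ∀ t ∈ X, s ≠ t → s.1 = t.1 → s.1 < (Cardinal.aleph 1).ord → i s t = ∅
  P6 : ∀ s ∈ X, ∀ t ∈ X, le s t → s ≠ t → ∀ α : Ordinal, t.1 = α + 1 →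
    ∃ u ∈ X, le s u ∧ le u t ∧ u ≠ t ∧ u.1 = α

/-- The extension order on conditions: `p' ≤ p` iff `X_p ⊆ X_{p'}`,
`⪯_p = ⪯_{p'} ∩ (X_p × X_p)` and `i_p ⊆ i_{p'}`. -/
def Cond.ext {lam : Cardinal.{0}} {F : Ordinal → Ordinal → Ordinal}
    (p' p : Cond lam F) : Prop :=
  p.X ⊆ p'.X ∧ (∀ s ∈ p.X, ∀ t ∈ p.X, (p.le s t ↔ p'.le s t)) ∧
    (∀ s ∈ p.X, ∀ t ∈ p.X, s ≠ t → p.i s t = p'.i s t)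


section Helpers
open Set
universe u1 v1


theorem exists_uncountable_fiber {α : Type u1} {β : Type v1} (S : Set α) (hS : ¬ S.Countable)
    (f : α → β) (C : Set β) (hC : C.Countable) (hf : ∀ x ∈ S, f x ∈ C) :
    ∃ c, ¬ {x ∈ S | f x = c}.Countable := by
  by_contra h
  push_neg at h
  apply hS
  have hsub : S ⊆ ⋃ c ∈ C, {x ∈ S | f x = c} := fun x hx =>
    mem_biUnion (hf x hx) ⟨hx, rfl⟩
  exact (hC.biUnion fun c _ => h c).mono hsub

theorem exists_uncountable_pairwise {α : Type u1} (S : Set α) (hS : ¬ S.Countable)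
    (c : α → α → Prop)
    (hdeg : ∀ x ∈ S, {y | y ∈ S ∧ (c x y ∨ c y x)}.Countable) :
    ∃ T ⊆ S, ¬ T.Countable ∧ ∀ x ∈ T, ∀ y ∈ T, x ≠ y → ¬ c x y := by
  have hchain : ∀ ch ⊆ {U | U ⊆ S ∧ ∀ x ∈ U, ∀ y ∈ U, x ≠ y → ¬ c x y},
      IsChain (· ⊆ ·) ch → ∃ ub ∈ {U | U ⊆ S ∧ ∀ x ∈ U, ∀ y ∈ U, x ≠ y → ¬ c x y},
      ∀ s ∈ ch, s ⊆ ub := by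
    intro ch hchS hch
    refine ⟨⋃₀ ch, ⟨?_, ?_⟩, fun s hs => subset_sUnion_of_mem hs⟩
    · exact sUnion_subset fun u hu => (hchS hu).1
    · intro a ha b hb hab hcab
      obtain ⟨ua, hua, haua⟩ := ha
      obtain ⟨ub, hub, hbub⟩ := hb
      rcases hch.total hua hub with h | h
      · exact (hchS hub).2 a (h haua) b hbub hab hcab
      · exact (hchS hua).2 a haua b (h hbub) hab hcab
  obtain ⟨T, hTmax⟩ := zorn_subset {U | U ⊆ S ∧ ∀ x ∈ U, ∀ y ∈ U, x ≠ y → ¬ c x y} hchain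
  · refine ⟨T, hTmax.prop.1, ?_, hTmax.prop.2⟩
    intro hTc
    apply hS
    have hsub : S ⊆ T ∪ ⋃ t ∈ T, {y | y ∈ S ∧ (c t y ∨ c y t)} := by
      intro x hx
      by_cases hxT : x ∈ T
      · exact Or.inl hxT
      · right
        have hni : ¬ (insert x T ∈ {U | U ⊆ S ∧ ∀ x ∈ U, ∀ y ∈ U, x ≠ y → ¬ c x y}) := by
          intro hmem
          exact hxT (hTmax.eq_of_subset hmem (subset_insert x T) ▸ mem_insert x T)
        have hins : insert x T ⊆ S := insert_subset hx hTmax.prop.1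
        have hni2 : ¬ ∀ a ∈ insert x T, ∀ b ∈ insert x T, a ≠ b → ¬ c a b := fun hp => hni ⟨hins, hp⟩
        push_neg at hni2
        obtain ⟨a, ha, b, hb, hab, hcab⟩ := hni2
        rcases mem_insert_iff.1 ha with rfl | haT
        · rcases mem_insert_iff.1 hb with rfl | hbT
          · exact absurd rfl hab
          · exact mem_biUnion hbT ⟨hx, Or.inr hcab⟩
        · rcases mem_insert_iff.1 hb with rfl | hbT
          · exact mem_biUnion haT ⟨hx, Or.inl hcab⟩
          · exact absurd hcab (hTmax.prop.2 a haT b hbT hab)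
    exact ((hTc.union (hTc.biUnion fun t ht => hdeg t (hTmax.prop.1 ht)))).mono hsub

universe u v


theorem delta_system {β : Type v1} (n : ℕ) (𝒮 : Set (Set β)) (h1 : ∀ X ∈ 𝒮, X.Finite)
    (h2 : ∀ X ∈ 𝒮, X.ncard ≤ n) (hS : ¬ 𝒮.Countable) :
    ∃ 𝒯 ⊆ 𝒮, ¬ 𝒯.Countable ∧ ∃ R : Set β, ∀ X ∈ 𝒯, ∀ Y ∈ 𝒯, X ≠ Y → X ∩ Y = R := by
  induction n generalizing 𝒮 with
  | zero =>
    exfalso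
    apply hS
    have hsub : 𝒮 ⊆ {∅} := fun X hX => by
      have : X.ncard = 0 := Nat.le_zero.1 (h2 X hX)
      rw [Set.ncard_eq_zero (h1 X hX)] at this
      simp [this]
    exact (countable_singleton ∅).mono hsub
  | succ n ih =>
    by_cases hv : ∃ v, ¬ {X | X ∈ 𝒮 ∧ v ∈ X}.Countable
    · obtain ⟨v, hv⟩ := hv
      have h𝒮₂unc : ¬ ((fun X => X \ {v}) '' {X | X ∈ 𝒮 ∧ v ∈ X}).Countable := by
        intro hc
        apply hv
        have hsub : {X | X ∈ 𝒮 ∧ v ∈ X} ⊆ insert v '' ((fun X => X \ {v}) '' {X | X ∈ 𝒮 ∧ v ∈ X}) := by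
          intro X hX
          refine ⟨X \ {v}, ⟨X, hX, rfl⟩, ?_⟩
          rw [Set.insert_diff_singleton]
          exact Set.insert_eq_self.2 hX.2
        exact ((hc.image _).mono hsub)
      obtain ⟨𝒯₂, h𝒯₂sub, h𝒯₂unc, R₀, hR₀⟩ := ih ((fun X => X \ {v}) '' {X | X ∈ 𝒮 ∧ v ∈ X})
        (by rintro Y ⟨X, hX, rfl⟩; exact (h1 X hX.1).diff)
        (by rintro Y ⟨X, hX, rfl⟩
            have hd := Set.ncard_diff_singleton_of_mem hX.2
            have h2' := h2 X hX.1
            show (X \ {v}).ncard ≤ n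
            omega) h𝒮₂unc
      refine ⟨{X | X ∈ 𝒮 ∧ v ∈ X ∧ X \ {v} ∈ 𝒯₂}, fun X hX => hX.1, ?_, insert v R₀, ?_⟩
      · intro hc
        apply h𝒯₂unc
        have hsub : 𝒯₂ ⊆ (fun X => X \ {v}) '' {X | X ∈ 𝒮 ∧ v ∈ X ∧ X \ {v} ∈ 𝒯₂} := by
          intro Y hY
          obtain ⟨X, hX, rfl⟩ := h𝒯₂sub hY
          exact ⟨X, ⟨hX.1, hX.2, hY⟩, rfl⟩
        exact ((hc.image _).mono hsub)
      · intro X hX Y hY hne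
        have hXv : v ∈ X := hX.2.1
        have hYv : v ∈ Y := hY.2.1
        have hne' : X \ {v} ≠ Y \ {v} := by
          intro h
          apply hne
          have hins : insert v (X \ {v}) = insert v (Y \ {v}) := by rw [h]
          rwa [Set.insert_diff_singleton, Set.insert_diff_singleton,
            Set.insert_eq_self.2 hXv, Set.insert_eq_self.2 hYv] at hins
        have hroot := hR₀ _ hX.2.2 _ hY.2.2 hne'
        ext u
        constructor
        · rintro ⟨huX, huY⟩
          by_cases huv : u = v
          · exact huv ▸ mem_insert v R₀
          · refine mem_insert_of_mem _ (hroot ▸ ?_)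
            exact ⟨⟨huX, by simpa using huv⟩, ⟨huY, by simpa using huv⟩⟩
        · rintro (rfl | hu)
          · exact ⟨hXv, hYv⟩
          · rw [← hroot] at hu
            exact ⟨hu.1.1, hu.2.1⟩
    · push_neg at hv
      have hdeg : ∀ X ∈ 𝒮, {y | y ∈ 𝒮 ∧ ((X ∩ y).Nonempty ∨ (y ∩ X).Nonempty)}.Countable := by
        intro X hX
        have hsub : {y | y ∈ 𝒮 ∧ ((X ∩ y).Nonempty ∨ (y ∩ X).Nonempty)} ⊆
            ⋃ w ∈ X, {Y | Y ∈ 𝒮 ∧ w ∈ Y} := by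
          rintro Y ⟨hY, h | h⟩
          · obtain ⟨w, hwX, hwY⟩ := h
            exact mem_biUnion hwX ⟨hY, hwY⟩
          · obtain ⟨w, hwY, hwX⟩ := h
            exact mem_biUnion hwX ⟨hY, hwY⟩
        exact (((h1 X hX).countable).biUnion fun w _ => hv w).mono hsub
      obtain ⟨𝒯, h𝒯sub, h𝒯unc, hpw⟩ := exists_uncountable_pairwise 𝒮 hS
        (fun X Y => (X ∩ Y).Nonempty) hdeg
      refine ⟨𝒯, h𝒯sub, h𝒯unc, ∅, fun X hX Y hY hne => ?_⟩
      exact Set.not_nonempty_iff_eq_empty.1 (hpw X hX Y hY hne)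

theorem exists_bound_of_finite (G : Set Ordinal.{u1}) (hG : G.Finite) (b : Ordinal.{u1})
    (hb : 0 < b) (hlt : ∀ x ∈ G, x < b) : ∃ γ, γ < b ∧ ∀ x ∈ G, x ≤ γ := by
  rcases G.eq_empty_or_nonempty with rfl | hne
  · exact ⟨0, hb, by simp⟩
  · obtain ⟨a, haG, hamax⟩ := Set.Finite.exists_maximalFor id G hG hne
    refine ⟨a, hlt a haG, fun x hx => ?_⟩
    by_contra h
    push_neg at h
    exact absurd (hamax hx h.le) (not_le.2 h)

theorem countable_Iio_o1 {o : Ordinal.{0}} (h : o < (Cardinal.aleph 1).ord) :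
    (Set.Iio o).Countable := by
  rw [← Cardinal.le_aleph0_iff_set_countable, Ordinal.mk_Iio_ordinal]
  have hc : o.card ≤ ℵ₀ := by
    have := Cardinal.lt_ord.1 h
    rwa [← Cardinal.succ_aleph0, Order.lt_succ_iff] at this
  calc Cardinal.lift.{1} o.card ≤ Cardinal.lift.{1} ℵ₀ := Cardinal.lift_le.2 hc
    _ = ℵ₀ := Cardinal.lift_aleph0

theorem uncountable_of_aleph_one_le {α : Type u1} {s : Set α} :
    ¬ s.Countable ↔ Cardinal.aleph 1 ≤ #s := by
  rw [Cardinal.countable_iff_lt_aleph_one, not_lt]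

end Helpers

namespace CCC
variable {lam : Cardinal.{0}} {F : Ordinal.{0} → Ordinal.{0} → Ordinal.{0}}


/-- The amalgamated order. -/
def aleL (p q : Cond lam F) (s t : Ordinal × Ordinal) : Prop :=
  (s ∈ p.X ∧ t ∈ p.X ∧ p.le s t) ∨ (s ∈ q.X ∧ t ∈ q.X ∧ q.le s t) ∨
  (∃ w, w ∈ p.X ∧ w ∈ q.X ∧ s ∈ p.X ∧ t ∈ q.X ∧ p.le s w ∧ q.le w t) ∨
  (∃ w, w ∈ p.X ∧ w ∈ q.X ∧ s ∈ q.X ∧ t ∈ p.X ∧ q.le s w ∧ p.le w t)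

theorem aleL_swap (p q : Cond lam F) (s t : Ordinal × Ordinal) :
    aleL p q s t ↔ aleL q p s t := by
  constructor
  · rintro (d | d | ⟨w, h1, h2, h3, h4, h5, h6⟩ | ⟨w, h1, h2, h3, h4, h5, h6⟩)
    · exact Or.inr (Or.inl d)
    · exact Or.inl d
    · exact Or.inr (Or.inr (Or.inr ⟨w, h2, h1, h3, h4, h5, h6⟩))
    · exact Or.inr (Or.inr (Or.inl ⟨w, h2, h1, h3, h4, h5, h6⟩))
  · rintro (d | d | ⟨w, h1, h2, h3, h4, h5, h6⟩ | ⟨w, h1, h2, h3, h4, h5, h6⟩)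
    · exact Or.inr (Or.inl d)
    · exact Or.inl d
    · exact Or.inr (Or.inr (Or.inr ⟨w, h2, h1, h3, h4, h5, h6⟩))
    · exact Or.inr (Or.inr (Or.inl ⟨w, h2, h1, h3, h4, h5, h6⟩))

theorem aleL_refl (p q : Cond lam F) {s : Ordinal × Ordinal} (h : s ∈ p.X ∪ q.X) :
    aleL p q s s := by
  rcases h with h | h
  · exact Or.inl ⟨h, h, p.le_refl s h⟩
  · exact Or.inr (Or.inl ⟨h, h, q.le_refl s h⟩)

theorem aleL_mem {p q : Cond lam F} {s t : Ordinal × Ordinal} (h : aleL p q s t) :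
    (s ∈ p.X ∪ q.X) ∧ (t ∈ p.X ∪ q.X) := by
  rcases h with ⟨a, b, _⟩ | ⟨a, b, _⟩ | ⟨w, _, _, a, b, _, _⟩ | ⟨w, _, _, a, b, _, _⟩ <;>
    first
      | exact ⟨Or.inl a, Or.inl b⟩
      | exact ⟨Or.inr a, Or.inr b⟩
      | exact ⟨Or.inl a, Or.inr b⟩
      | exact ⟨Or.inr a, Or.inl b⟩

theorem lower_of_mem_i (p : Cond lam F) {s t : Ordinal × Ordinal} (hs : s ∈ p.X) (ht : t ∈ p.X)
    (hst : s ≠ t) {v : Ordinal × Ordinal} (hv : v ∈ p.i s t) :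
    v ∈ p.X ∧ p.le v s ∧ p.le v t := by
  have hvX : v ∈ p.X := p.i_sub s hs t ht hst hv
  have h := (p.i_spec s hs t ht hst v hvX).2 ⟨v, hv, p.le_refl v hvX⟩
  exact ⟨hvX, h.1, h.2⟩

theorem aleL_lt {p q : Cond lam F} {s t : Ordinal × Ordinal} (h : aleL p q s t) (hne : s ≠ t) :
    s.1 < t.1 := by
  rcases h with ⟨hs, ht, hle⟩ | ⟨hs, ht, hle⟩ | ⟨w, hwp, hwq, hs, ht, h1, h2⟩ |
      ⟨w, hwp, hwq, hs, ht, h1, h2⟩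
  · exact p.lt_levels s hs t ht hle hne
  · exact q.lt_levels s hs t ht hle hne
  · by_cases hsw : s = w
    · subst hsw; exact q.lt_levels s hwq t ht h2 hne
    · have l1 : s.1 < w.1 := p.lt_levels s hs w hwp h1 hsw
      by_cases hwt : w = t
      · subst hwt; exact l1
      · exact l1.trans (q.lt_levels w hwq t ht h2 hwt)
  · by_cases hsw : s = w
    · subst hsw; exact p.lt_levels s hwp t ht h2 hne
    · have l1 : s.1 < w.1 := q.lt_levels s hs w hwq h1 hsw
      by_cases hwt : w = t
      · subst hwt; exact l1
      · exact l1.trans (p.lt_levels w hwp t ht h2 hwt)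

theorem aleL_antisymm {p q : Cond lam F} {s t : Ordinal × Ordinal}
    (h1 : aleL p q s t) (h2 : aleL p q t s) : s = t := by
  by_contra hne
  exact absurd ((aleL_lt h1 hne).trans (aleL_lt h2 (Ne.symm hne))) (lt_irrefl _)

theorem cross_step {p q : Cond lam F} {u s : Ordinal × Ordinal}
    (hu : u ∈ q.X) (hunp : u ∉ p.X) (hs : s ∈ p.X) (h : aleL p q u s) :
    ∃ w, w ∈ p.X ∧ w ∈ q.X ∧ q.le u w ∧ p.le w s := by
  rcases h with ⟨a, _, _⟩ | ⟨_, hsq, hle⟩ | ⟨w, _, _, a, _, _, _⟩ | ⟨w, hwp, hwq, _, _, h1, h2⟩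
  · exact absurd a hunp
  · exact ⟨s, hs, hsq, hle, p.le_refl s hs⟩
  · exact absurd a hunp
  · exact ⟨w, hwp, hwq, h1, h2⟩

section withH2
variable {p q : Cond lam F}
  (H2 : ∀ s t, s ∈ p.X → s ∈ q.X → t ∈ p.X → t ∈ q.X → (p.le s t ↔ q.le s t))

include H2

theorem aleL_loc {s t : Ordinal × Ordinal} (hs : s ∈ p.X) (ht : t ∈ p.X) :
    aleL p q s t ↔ p.le s t := by
  constructor
  · rintro (⟨_, _, hle⟩ | ⟨hsq, htq, hle⟩ | ⟨w, hwp, hwq, _, htq, h1, h2⟩ |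
        ⟨w, hwp, hwq, hsq, _, h1, h2⟩)
    · exact hle
    · exact (H2 s t hs hsq ht htq).2 hle
    · exact p.le_trans s hs w hwp t ht h1 ((H2 w t hwp hwq ht htq).2 h2)
    · exact p.le_trans s hs w hwp t ht ((H2 s w hs hsq hwp hwq).2 h1) h2
  · intro h
    exact Or.inl ⟨hs, ht, h⟩

theorem trans_aux1 {s t u : Ordinal × Ordinal}
    (hd : s ∈ p.X ∧ t ∈ p.X ∧ p.le s t) (h2 : aleL p q t u) : aleL p q s u := by
  obtain ⟨hsp, htp, hle⟩ := hd
  rcases h2 with ⟨_, hup, hle2⟩ | ⟨htq, huq, hle2⟩ | ⟨w, hwp, hwq, _, huq, k1, k2⟩ |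
      ⟨w, hwp, hwq, htq, hup, k1, k2⟩
  · exact Or.inl ⟨hsp, hup, p.le_trans s hsp t htp u hup hle hle2⟩
  · exact Or.inr (Or.inr (Or.inl ⟨t, htp, htq, hsp, huq, hle, hle2⟩))
  · exact Or.inr (Or.inr (Or.inl ⟨w, hwp, hwq, hsp, huq, p.le_trans s hsp t htp w hwp hle k1, k2⟩))
  · have htw : p.le t w := (H2 t w htp htq hwp hwq).2 k1
    exact Or.inl ⟨hsp, hup, p.le_trans s hsp w hwp u hup (p.le_trans s hsp t htp w hwp hle htw) k2⟩

theorem trans_aux3 {s t u : Ordinal × Ordinal}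
    (hd : ∃ w, w ∈ p.X ∧ w ∈ q.X ∧ s ∈ p.X ∧ t ∈ q.X ∧ p.le s w ∧ q.le w t)
    (h2 : aleL p q t u) : aleL p q s u := by
  obtain ⟨w, hwp, hwq, hsp, htq, h1, hwt⟩ := hd
  rcases h2 with ⟨htp, hup, hle2⟩ | ⟨_, huq, hle2⟩ | ⟨w', hw'p, hw'q, htp, huq, k1, k2⟩ |
      ⟨w', hw'p, hw'q, _, hup, k1, k2⟩
  · have hwt' : p.le w t := (H2 w t hwp hwq htp htq).2 hwt
    exact Or.inl ⟨hsp, hup, p.le_trans s hsp w hwp u hup h1 (p.le_trans w hwp t htp u hup hwt' hle2)⟩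
  · exact Or.inr (Or.inr (Or.inl ⟨w, hwp, hwq, hsp, huq, h1, q.le_trans w hwq t htq u huq hwt hle2⟩))
  · have hwt' : p.le w t := (H2 w t hwp hwq htp htq).2 hwt
    exact Or.inr (Or.inr (Or.inl ⟨w', hw'p, hw'q, hsp, huq,
      p.le_trans s hsp w hwp w' hw'p h1 (p.le_trans w hwp t htp w' hw'p hwt' k1), k2⟩))
  · have hww' : q.le w w' := q.le_trans w hwq t htq w' hw'q hwt k1
    have hww'2 : p.le w w' := (H2 w w' hwp hwq hw'p hw'q).2 hww'
    exact Or.inl ⟨hsp, hup, p.le_trans s hsp w' hw'p u hup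
      (p.le_trans s hsp w hwp w' hw'p h1 hww'2) k2⟩

end withH2

theorem H2swap {p q : Cond lam F}
    (H2 : ∀ s t, s ∈ p.X → s ∈ q.X → t ∈ p.X → t ∈ q.X → (p.le s t ↔ q.le s t)) :
    ∀ s t, s ∈ q.X → s ∈ p.X → t ∈ q.X → t ∈ p.X → (q.le s t ↔ p.le s t) :=
  fun s t a b c d => (H2 s t b a d c).symm

theorem aleL_trans {p q : Cond lam F}
    (H2 : ∀ s t, s ∈ p.X → s ∈ q.X → t ∈ p.X → t ∈ q.X → (p.le s t ↔ q.le s t))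
    {s t u : Ordinal × Ordinal} (h1 : aleL p q s t) (h2 : aleL p q t u) : aleL p q s u := by
  rcases h1 with d1 | d2 | d3 | d4
  · exact trans_aux1 H2 d1 h2
  · exact (aleL_swap q p s u).1 (trans_aux1 (H2swap H2) d2 ((aleL_swap p q t u).1 h2))
  · exact trans_aux3 H2 d3 h2
  · obtain ⟨w, hwp, hwq, hsq, htp, k1, k2⟩ := d4
    exact (aleL_swap q p s u).1 (trans_aux3 (H2swap H2) ⟨w, hwq, hwp, hsq, htp, k1, k2⟩
      ((aleL_swap p q t u).1 h2))

def CLB (p q : Cond lam F) (s t : Ordinal × Ordinal) : Set (Ordinal × Ordinal) :=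
  {u | u ∈ p.X ∪ q.X ∧ aleL p q u s ∧ aleL p q u t}

def MaxCLB (p q : Cond lam F) (s t : Ordinal × Ordinal) : Set (Ordinal × Ordinal) :=
  {u | u ∈ CLB p q s t ∧ ∀ v ∈ CLB p q s t, aleL p q u v → u = v}

def crossPair (p q : Cond lam F) (s t : Ordinal × Ordinal) : Prop :=
  (s ∈ p.X ∧ s ∉ q.X ∧ t ∈ q.X ∧ t ∉ p.X) ∨ (s ∈ q.X ∧ s ∉ p.X ∧ t ∈ p.X ∧ t ∉ q.X)

def amI (p q : Cond lam F) (s t : Ordinal × Ordinal) : Set (Ordinal × Ordinal) :=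
  {v | (s ∈ p.X ∧ t ∈ p.X ∧ v ∈ p.i s t) ∨ (s ∈ q.X ∧ t ∈ q.X ∧ v ∈ q.i s t) ∨
    (crossPair p q s t ∧ v ∈ MaxCLB p q s t)}

theorem CLB_swap (p q : Cond lam F) (s t : Ordinal × Ordinal) :
    CLB p q s t = CLB q p s t := by
  ext u
  simp only [CLB, Set.mem_setOf_eq, Set.mem_union]
  rw [aleL_swap p q u s, aleL_swap p q u t, or_comm]

theorem MaxCLB_swap (p q : Cond lam F) (s t : Ordinal × Ordinal) :
    MaxCLB p q s t = MaxCLB q p s t := by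
  ext u
  simp only [MaxCLB, Set.mem_setOf_eq, CLB_swap p q s t]
  constructor
  · rintro ⟨h1, h2⟩
    exact ⟨h1, fun v hv hl => h2 v hv ((aleL_swap p q u v).2 hl)⟩
  · rintro ⟨h1, h2⟩
    exact ⟨h1, fun v hv hl => h2 v hv ((aleL_swap p q u v).1 hl)⟩

theorem amI_swap (p q : Cond lam F) (s t : Ordinal × Ordinal) :
    amI p q s t = amI q p s t := by
  ext v
  simp only [amI, Set.mem_setOf_eq, MaxCLB_swap p q s t, crossPair]
  tauto

theorem CLB_comm (p q : Cond lam F) (s t : Ordinal × Ordinal) :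
    CLB p q s t = CLB p q t s := by
  ext u; simp only [CLB, Set.mem_setOf_eq]; tauto

theorem amI_comm (p q : Cond lam F) (s t : Ordinal × Ordinal) :
    amI p q s t = amI p q t s := by
  ext v
  simp only [amI, Set.mem_setOf_eq, MaxCLB, CLB_comm p q s t, crossPair, p.i_symm s t,
    q.i_symm s t]
  tauto

theorem amI_eq_p {p q : Cond lam F}
    (H3 : ∀ s t, s ∈ p.X → s ∈ q.X → t ∈ p.X → t ∈ q.X → s ≠ t → p.i s t = q.i s t)
    {s t : Ordinal × Ordinal} (hs : s ∈ p.X) (ht : t ∈ p.X) (hst : s ≠ t) :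
    amI p q s t = p.i s t := by
  ext v
  simp only [amI, Set.mem_setOf_eq]
  constructor
  · rintro (⟨_, _, hv⟩ | ⟨hsq, htq, hv⟩ | ⟨hc, _⟩)
    · exact hv
    · rwa [H3 s t hs hsq ht htq hst]
    · rcases hc with ⟨_, _, _, htnp⟩ | ⟨_, hsnp, _, _⟩
      · exact absurd ht htnp
      · exact absurd hs hsnp
  · intro hv
    exact Or.inl ⟨hs, ht, hv⟩

theorem amI_eq_cross {p q : Cond lam F} {s t : Ordinal × Ordinal}
    (hc : crossPair p q s t) : amI p q s t = MaxCLB p q s t := by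
  ext v
  simp only [amI, Set.mem_setOf_eq]
  constructor
  · rintro (⟨hsp, htp, _⟩ | ⟨hsq, htq, _⟩ | ⟨_, hv⟩)
    · rcases hc with ⟨_, _, _, htnp⟩ | ⟨_, hsnp, _, _⟩
      · exact absurd htp htnp
      · exact absurd hsp hsnp
    · rcases hc with ⟨_, hsnq, _, _⟩ | ⟨_, _, _, htnq⟩
      · exact absurd hsq hsnq
      · exact absurd htq htnq
    · exact hv
  · intro hv
    exact Or.inr (Or.inr ⟨hc, hv⟩)

theorem specA {p q : Cond lam F}
    (H2 : ∀ s t, s ∈ p.X → s ∈ q.X → t ∈ p.X → t ∈ q.X → (p.le s t ↔ q.le s t))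
    (H3 : ∀ s t, s ∈ p.X → s ∈ q.X → t ∈ p.X → t ∈ q.X → s ≠ t → p.i s t = q.i s t)
    {s t : Ordinal × Ordinal} (hs : s ∈ p.X) (ht : t ∈ p.X) (hst : s ≠ t)
    {u : Ordinal × Ordinal} (hu : u ∈ p.X ∪ q.X) :
    (aleL p q u s ∧ aleL p q u t) ↔ ∃ v ∈ p.i s t, aleL p q u v := by
  constructor
  · rintro ⟨hus, hut⟩
    by_cases hup : u ∈ p.X
    · have h1 : p.le u s := (aleL_loc H2 hup hs).1 hus
      have h2 : p.le u t := (aleL_loc H2 hup ht).1 hut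
      obtain ⟨v, hv, hlev⟩ := (p.i_spec s hs t ht hst u hup).1 ⟨h1, h2⟩
      exact ⟨v, hv, Or.inl ⟨hup, p.i_sub s hs t ht hst hv, hlev⟩⟩
    · have huq : u ∈ q.X := hu.resolve_left hup
      obtain ⟨w₁, hw₁p, hw₁q, hu1, hw1s⟩ := cross_step huq hup hs hus
      obtain ⟨w₂, hw₂p, hw₂q, hu2, hw2t⟩ := cross_step huq hup ht hut
      by_cases hww : w₁ = w₂
      · subst hww
        obtain ⟨v, hv, hlev⟩ := (p.i_spec s hs t ht hst w₁ hw₁p).1 ⟨hw1s, hw2t⟩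
        exact ⟨v, hv, Or.inr (Or.inr (Or.inr
          ⟨w₁, hw₁p, hw₁q, huq, p.i_sub s hs t ht hst hv, hu1, hlev⟩))⟩
      · obtain ⟨z, hz, hupz⟩ := (q.i_spec w₁ hw₁q w₂ hw₂q hww u huq).1 ⟨hu1, hu2⟩
        have hzq := lower_of_mem_i q hw₁q hw₂q hww hz
        have hzpiq : z ∈ p.i w₁ w₂ := by
          rw [H3 w₁ w₂ hw₁p hw₁q hw₂p hw₂q hww]; exact hz
        have hzp : z ∈ p.X := p.i_sub w₁ hw₁p w₂ hw₂p hww hzpiq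
        have hzw1 : p.le z w₁ := (H2 z w₁ hzp hzq.1 hw₁p hw₁q).2 hzq.2.1
        have hzw2 : p.le z w₂ := (H2 z w₂ hzp hzq.1 hw₂p hw₂q).2 hzq.2.2
        have hzs : p.le z s := p.le_trans z hzp w₁ hw₁p s hs hzw1 hw1s
        have hzt : p.le z t := p.le_trans z hzp w₂ hw₂p t ht hzw2 hw2t
        obtain ⟨v, hv, hlev⟩ := (p.i_spec s hs t ht hst z hzp).1 ⟨hzs, hzt⟩
        exact ⟨v, hv, Or.inr (Or.inr (Or.inr
          ⟨z, hzp, hzq.1, huq, p.i_sub s hs t ht hst hv, hupz, hlev⟩))⟩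
  · rintro ⟨v, hv, huv⟩
    have h := lower_of_mem_i p hs ht hst hv
    have hvs : aleL p q v s := Or.inl ⟨h.1, hs, h.2.1⟩
    have hvt : aleL p q v t := Or.inl ⟨h.1, ht, h.2.2⟩
    exact ⟨aleL_trans H2 huv hvs, aleL_trans H2 huv hvt⟩

theorem specC {p q : Cond lam F}
    (H2 : ∀ s t, s ∈ p.X → s ∈ q.X → t ∈ p.X → t ∈ q.X → (p.le s t ↔ q.le s t))
    {s t u : Ordinal × Ordinal} (hu : u ∈ p.X ∪ q.X) :
    (aleL p q u s ∧ aleL p q u t) ↔ ∃ v ∈ MaxCLB p q s t, aleL p q u v := by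
  constructor
  · rintro ⟨hus, hut⟩
    have huCLB : u ∈ CLB p q s t := ⟨hu, hus, hut⟩
    have hSfin : {v | v ∈ CLB p q s t ∧ aleL p q u v}.Finite :=
      (p.finite.union q.finite).subset (fun v hv => hv.1.1)
    have hSne : {v | v ∈ CLB p q s t ∧ aleL p q u v}.Nonempty :=
      ⟨u, huCLB, aleL_refl p q hu⟩
    obtain ⟨a, ⟨haCLB, hua⟩, hamax⟩ :=
      Set.Finite.exists_maximalFor (fun v => v.1) _ hSfin hSne
    refine ⟨a, ⟨haCLB, fun v hv hav => ?_⟩, hua⟩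
    by_contra hne
    have hlt := aleL_lt hav hne
    exact absurd (hamax ⟨hv, aleL_trans H2 hua hav⟩ hlt.le) (not_le.2 hlt)
  · rintro ⟨v, hv, huv⟩
    exact ⟨aleL_trans H2 huv hv.1.2.1, aleL_trans H2 huv hv.1.2.2⟩

theorem cross_bound {p q : Cond lam F}
    (H2 : ∀ s t, s ∈ p.X → s ∈ q.X → t ∈ p.X → t ∈ q.X → (p.le s t ↔ q.le s t))
    {s t : Ordinal × Ordinal} (hsp : s ∈ p.X) (hsnq : s ∉ q.X) (htq : t ∈ q.X) (htnp : t ∉ p.X)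
    (hs1 : s.1 = (Cardinal.aleph 1).ord) (ht1 : t.1 = (Cardinal.aleph 1).ord)
    {v : Ordinal × Ordinal} (hv : v ∈ CLB p q s t) :
    ∃ w, w ∈ p.X ∧ w ∈ q.X ∧ v.1 ≤ w.1 ∧ w.1 < (Cardinal.aleph 1).ord := by
  obtain ⟨hvXX, hvs, hvt⟩ := hv
  by_cases hvq : v ∈ q.X
  · by_cases hvp : v ∈ p.X
    · -- v in the root
      have hvnt : v ≠ t := fun h => htnp (h ▸ hvp)
      have hlt : v.1 < t.1 := aleL_lt hvt hvnt
      exact ⟨v, hvp, hvq, le_refl _, ht1 ▸ hlt⟩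
    · obtain ⟨w, hwp, hwq, h1, h2⟩ := cross_step hvq hvp hsp hvs
      have hwns : w ≠ s := fun h => hsnq (h ▸ hwq)
      have hwlt : w.1 < s.1 := p.lt_levels w hwp s hsp h2 hwns
      have hvw : v.1 ≤ w.1 := by
        by_cases hvw' : v = w
        · exact hvw' ▸ le_refl _
        · exact (q.lt_levels v hvq w hwq h1 hvw').le
      exact ⟨w, hwp, hwq, hvw, hs1 ▸ hwlt⟩
  · have hvp : v ∈ p.X := hvXX.resolve_right hvq
    obtain ⟨w, hwq, hwp, h1, h2⟩ := cross_step (p := q) (q := p) hvp hvq htq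
      ((aleL_swap p q v t).1 hvt)
    have hwnt : w ≠ t := fun h => htnp (h ▸ hwp)
    have hwlt : w.1 < t.1 := q.lt_levels w hwq t htq h2 hwnt
    have hvw : v.1 ≤ w.1 := by
      by_cases hvw' : v = w
      · exact hvw' ▸ le_refl _
      · exact (p.lt_levels v hvp w hwp h1 hvw').le
    exact ⟨w, hwp, hwq, hvw, ht1 ▸ hwlt⟩

theorem amalg (p q : Cond lam F)
    (H2 : ∀ s t, s ∈ p.X → s ∈ q.X → t ∈ p.X → t ∈ q.X → (p.le s t ↔ q.le s t))
    (H3 : ∀ s t, s ∈ p.X → s ∈ q.X → t ∈ p.X → t ∈ q.X → s ≠ t → p.i s t = q.i s t)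
    (H4 : ∀ s t, s ∈ p.X → s ∉ q.X → t ∈ q.X → t ∉ p.X → s.1 = t.1 →
      ¬ s.1 < (Cardinal.aleph 1).ord)
    (H5 : ∀ s t, s ∈ p.X → s ∉ q.X → t ∈ q.X → t ∉ p.X → s.1 = (Cardinal.aleph 1).ord →
      t.1 = (Cardinal.aleph 1).ord → ∀ w, w ∈ p.X → w ∈ q.X → w.1 < (Cardinal.aleph 1).ord →
      w.1 < F s.2 t.2 ∧ w.1 < F t.2 s.2) :
    ∃ r : Cond lam F, r.ext p ∧ r.ext q := by
  have H2' := H2swap H2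
  have H3' : ∀ s t, s ∈ q.X → s ∈ p.X → t ∈ q.X → t ∈ p.X → s ≠ t → q.i s t = p.i s t :=
    fun s t a b c d e => (H3 s t b a d c e).symm
  refine ⟨⟨p.X ∪ q.X, p.finite.union q.finite, Set.union_subset p.subT q.subT,
    aleL p q, fun s hs => aleL_refl p q hs,
    fun s _ t _ h1 h2 => aleL_antisymm h1 h2,
    fun s _ t _ u _ h1 h2 => aleL_trans H2 h1 h2,
    fun s _ t _ h hne => aleL_lt h hne,
    amI p q, amI_comm p q, ?_, ?_, ?_, ?_, ?_⟩, ?_, ?_⟩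
  -- i_sub
  · rintro s hs t ht hst v (⟨hsp, htp, hv⟩ | ⟨hsq, htq, hv⟩ | ⟨_, hv⟩)
    · exact Or.inl (p.i_sub s hsp t htp hst hv)
    · exact Or.inr (q.i_sub s hsq t htq hst hv)
    · exact hv.1.1
  -- i_spec
  · intro s hs t ht hst u hu
    by_cases hbq : s ∈ q.X ∧ t ∈ q.X
    · obtain ⟨hsq, htq⟩ := hbq
      have hu' : u ∈ q.X ∪ p.X := hu.elim Or.inr Or.inl
      rw [amI_swap p q s t, amI_eq_p H3' hsq htq hst]
      constructor
      · rintro ⟨h1, h2⟩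
        obtain ⟨v, hv, h⟩ := (specA H2' H3' hsq htq hst hu').1
          ⟨(aleL_swap p q u s).1 h1, (aleL_swap p q u t).1 h2⟩
        exact ⟨v, hv, (aleL_swap p q u v).2 h⟩
      · rintro ⟨v, hv, h⟩
        have hh := (specA H2' H3' hsq htq hst hu').2 ⟨v, hv, (aleL_swap p q u v).1 h⟩
        exact ⟨(aleL_swap p q u s).2 hh.1, (aleL_swap p q u t).2 hh.2⟩
    · by_cases hsp : s ∈ p.X <;> by_cases htp : t ∈ p.X
      · rw [amI_eq_p H3 hsp htp hst]
        exact specA H2 H3 hsp htp hst hu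
      · have htq : t ∈ q.X := ht.resolve_left htp
        have hsnq : s ∉ q.X := fun h => hbq ⟨h, htq⟩
        rw [amI_eq_cross (Or.inl ⟨hsp, hsnq, htq, htp⟩)]
        exact specC H2 hu
      · have hsq : s ∈ q.X := hs.resolve_left hsp
        have htnq : t ∉ q.X := fun h => hbq ⟨hsq, h⟩
        rw [amI_eq_cross (Or.inr ⟨hsq, hsp, htp, htnq⟩)]
        exact specC H2 hu
      · exact absurd ⟨hs.resolve_left hsp, ht.resolve_left htp⟩ hbq
  -- P4
  · rintro s hs t ht hst hs1 ht1 v (⟨hsp, htp, hv⟩ | ⟨hsq, htq, hv⟩ | ⟨hc, hv⟩)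
    · exact p.P4 s hsp t htp hst hs1 ht1 v hv
    · exact q.P4 s hsq t htq hst hs1 ht1 v hv
    · rcases hc with ⟨hsp, hsnq, htq, htnp⟩ | ⟨hsq, hsnp, htp, htnq⟩
      · obtain ⟨w, hwp, hwq, hvw, hwlt⟩ := cross_bound H2 hsp hsnq htq htnp hs1 ht1 hv.1
        exact lt_of_le_of_lt hvw (H5 s t hsp hsnq htq htnp hs1 ht1 w hwp hwq hwlt).1
      · have hv' : v ∈ CLB q p s t := (CLB_swap p q s t) ▸ hv.1
        obtain ⟨w, hwq, hwp, hvw, hwlt⟩ := cross_bound H2' hsq hsnp htp htnq hs1 ht1 hv'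
        exact lt_of_le_of_lt hvw (H5 t s htp htnq hsq hsnp ht1 hs1 w hwp hwq hwlt).2
  -- P5
  · intro s hs t ht hst h1 h2
    ext v
    simp only [Set.mem_empty_iff_false, iff_false]
    rintro (⟨hsp, htp, hv⟩ | ⟨hsq, htq, hv⟩ | ⟨hc, hv⟩)
    · rw [p.P5 s hsp t htp hst h1 h2] at hv
      exact hv
    · rw [q.P5 s hsq t htq hst h1 h2] at hv
      exact hv
    · rcases hc with ⟨hsp, hsnq, htq, htnp⟩ | ⟨hsq, hsnp, htp, htnq⟩
      · exact H4 s t hsp hsnq htq htnp h1 h2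
      · exact H4 t s htp htnq hsq hsnp h1.symm (h1 ▸ h2)
  -- P6
  · rintro s hs t ht (⟨hsp, htp, hle⟩ | ⟨hsq, htq, hle⟩ | ⟨w, hwp, hwq, hsp, htq, h1, h2⟩ |
      ⟨w, hwp, hwq, hsq, htp, h1, h2⟩) hst α hα
    · obtain ⟨u, hu, k1, k2, k3, k4⟩ := p.P6 s hsp t htp hle hst α hα
      exact ⟨u, Or.inl hu, Or.inl ⟨hsp, hu, k1⟩, Or.inl ⟨hu, htp, k2⟩, k3, k4⟩
    · obtain ⟨u, hu, k1, k2, k3, k4⟩ := q.P6 s hsq t htq hle hst α hα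
      exact ⟨u, Or.inr hu, Or.inr (Or.inl ⟨hsq, hu, k1⟩), Or.inr (Or.inl ⟨hu, htq, k2⟩), k3, k4⟩
    · by_cases hwt : w = t
      · subst hwt
        obtain ⟨u, hu, k1, k2, k3, k4⟩ := p.P6 s hsp w hwp h1 hst α hα
        exact ⟨u, Or.inl hu, Or.inl ⟨hsp, hu, k1⟩, Or.inl ⟨hu, hwp, k2⟩, k3, k4⟩
      · obtain ⟨u, huq, k1, k2, k3, k4⟩ := q.P6 w hwq t htq h2 hwt α hα
        exact ⟨u, Or.inr huq, Or.inr (Or.inr (Or.inl ⟨w, hwp, hwq, hsp, huq, h1, k1⟩)),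
          Or.inr (Or.inl ⟨huq, htq, k2⟩), k3, k4⟩
    · by_cases hwt : w = t
      · subst hwt
        obtain ⟨u, hu, k1, k2, k3, k4⟩ := q.P6 s hsq w hwq h1 hst α hα
        exact ⟨u, Or.inr hu, Or.inr (Or.inl ⟨hsq, hu, k1⟩), Or.inr (Or.inl ⟨hu, hwq, k2⟩), k3, k4⟩
      · obtain ⟨u, hup, k1, k2, k3, k4⟩ := p.P6 w hwp t htp h2 hwt α hα
        exact ⟨u, Or.inl hup, Or.inr (Or.inr (Or.inr ⟨w, hwp, hwq, hsq, hup, h1, k1⟩)),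
          Or.inl ⟨hup, htp, k2⟩, k3, k4⟩
  -- ext p
  · exact ⟨Set.subset_union_left, fun s hs t ht => (aleL_loc H2 hs ht).symm,
      fun s hs t ht hst => (amI_eq_p H3 hs ht hst).symm⟩
  -- ext q
  · refine ⟨Set.subset_union_right, fun s hs t ht => ?_, fun s hs t ht hst => ?_⟩
    · exact ((aleL_loc H2' hs ht).symm).trans (aleL_swap p q s t).symm
    · exact ((amI_eq_p H3' hs ht hst).symm).trans (amI_swap p q s t).symm

end CCC

/-- The forcing `P` satisfies the countable chain condition: every antichain is
countable. -/
theorem forcing_ccc (lam : Cardinal.{0}) (hlam : Cardinal.aleph 3 ≤ lam)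
    (F : Ordinal → Ordinal → Ordinal) (hFsymm : ∀ a b, F a b = F b a)
    (hFrange : ∀ a b, F a b < (Cardinal.aleph 1).ord)
    (hF : StronglyUnbounded lam F)
    (A : Set (Cond lam F))
    (hA : ∀ p ∈ A, ∀ q ∈ A, p ≠ q → ¬ ∃ r : Cond lam F, r.ext p ∧ r.ext q) :
    A.Countable := by
  classical
  by_contra hunc
  -- two conditions in A with the same data are equal
  have hcompat : ∀ p ∈ A, ∀ q ∈ A, p.X = q.X →
      (∀ s ∈ q.X, ∀ t ∈ q.X, (q.le s t ↔ p.le s t)) →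
      (∀ s ∈ q.X, ∀ t ∈ q.X, s ≠ t → q.i s t = p.i s t) → p = q := by
    intro p hp q hq hX hle hi
    by_contra hne
    exact hA p hp q hq hne ⟨p, ⟨subset_rfl, fun _ _ _ _ => Iff.rfl, fun _ _ _ _ _ => rfl⟩,
      hX.symm.subset, hle, hi⟩
  -- fibers of the map to X are finite
  have hfib : ∀ XX : Set (Ordinal × Ordinal), XX.Finite →
      {pp | pp ∈ A ∧ pp.X = XX}.Finite := by
    intro XX hXfin
    have hinj : Set.InjOn
        (fun pp : Cond lam F =>
          (({x | x.1 ∈ XX ∧ x.2 ∈ XX ∧ pp.le x.1 x.2} :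
              Set ((Ordinal × Ordinal) × (Ordinal × Ordinal))),
           ({y | y.1.1 ∈ XX ∧ y.1.2 ∈ XX ∧ y.1.1 ≠ y.1.2 ∧ y.2 ∈ pp.i y.1.1 y.1.2} :
              Set (((Ordinal × Ordinal) × (Ordinal × Ordinal)) × (Ordinal × Ordinal)))))
        {pp | pp ∈ A ∧ pp.X = XX} := by
      intro p hp q hq heq
      simp only [Prod.mk.injEq] at heq
      refine hcompat p hp.1 q hq.1 (hp.2.trans hq.2.symm) ?_ ?_
      · intro s hs t ht
        have hs' : s ∈ XX := hq.2 ▸ hs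
        have ht' : t ∈ XX := hq.2 ▸ ht
        constructor
        · intro h
          have hm : (s, t) ∈ {x : (Ordinal × Ordinal) × (Ordinal × Ordinal) |
              x.1 ∈ XX ∧ x.2 ∈ XX ∧ q.le x.1 x.2} := ⟨hs', ht', h⟩
          rw [← heq.1] at hm
          exact hm.2.2
        · intro h
          have hm : (s, t) ∈ {x : (Ordinal × Ordinal) × (Ordinal × Ordinal) |
              x.1 ∈ XX ∧ x.2 ∈ XX ∧ p.le x.1 x.2} := ⟨hs', ht', h⟩
          rw [heq.1] at hm
          exact hm.2.2
      · intro s hs t ht hst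
        have hs' : s ∈ XX := hq.2 ▸ hs
        have ht' : t ∈ XX := hq.2 ▸ ht
        ext v
        constructor
        · intro h
          have hm : ((s, t), v) ∈ {y : ((Ordinal × Ordinal) × (Ordinal × Ordinal)) ×
              (Ordinal × Ordinal) | y.1.1 ∈ XX ∧ y.1.2 ∈ XX ∧ y.1.1 ≠ y.1.2 ∧
              y.2 ∈ q.i y.1.1 y.1.2} := ⟨hs', ht', hst, h⟩
          rw [← heq.2] at hm
          exact hm.2.2.2
        · intro h
          have hm : ((s, t), v) ∈ {y : ((Ordinal × Ordinal) × (Ordinal × Ordinal)) ×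
              (Ordinal × Ordinal) | y.1.1 ∈ XX ∧ y.1.2 ∈ XX ∧ y.1.1 ≠ y.1.2 ∧
              y.2 ∈ p.i y.1.1 y.1.2} := ⟨hs', ht', hst, h⟩
          rw [heq.2] at hm
          exact hm.2.2.2
    refine Set.Finite.of_finite_image (Set.Finite.subset (Set.Finite.prod
      ((hXfin.prod hXfin).finite_subsets)
      (((hXfin.prod hXfin).prod hXfin).finite_subsets)) ?_) hinj
    rintro y ⟨pp, hpp, rfl⟩
    refine ⟨fun x hx => ⟨hx.1, hx.2.1⟩, fun x hx => ⟨⟨hx.1, hx.2.1⟩, ?_⟩⟩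
    have h1 : x.1.1 ∈ pp.X := hpp.2.symm ▸ hx.1
    have h2 : x.1.2 ∈ pp.X := hpp.2.symm ▸ hx.2.1
    exact hpp.2 ▸ pp.i_sub x.1.1 h1 x.1.2 h2 hx.2.2.1 hx.2.2.2
  -- the image of A under X is uncountable
  have himun : ¬ (Cond.X '' A).Countable := by
    intro hc
    apply hunc
    have hsub : A ⊆ ⋃ XX ∈ Cond.X '' A, {pp | pp ∈ A ∧ pp.X = XX} :=
      fun pp hpp => Set.mem_biUnion ⟨pp, hpp, rfl⟩ ⟨hpp, rfl⟩
    refine (hc.biUnion fun XX hXX => ?_).mono hsub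
    obtain ⟨pp, _, rfl⟩ := hXX
    exact (hfib pp.X pp.finite).countable
  -- make the size of X constant
  obtain ⟨n₀, hn₀⟩ := exists_uncountable_fiber (Cond.X '' A) himun Set.ncard
    (Set.univ : Set ℕ) Set.countable_univ (fun _ _ => Set.mem_univ _)
  -- Δ-system
  obtain ⟨𝒯, h𝒯sub, h𝒯unc, R, hR⟩ := delta_system n₀ {x | x ∈ Cond.X '' A ∧ x.ncard = n₀}
    (fun X hX => by obtain ⟨pp, _, rfl⟩ := hX.1; exact pp.finite)
    (fun X hX => le_of_eq hX.2) hn₀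
  -- pick one condition for each set in the Δ-system
  have hpick : ∀ X ∈ 𝒯, ∃ pp, pp ∈ A ∧ pp.X = X := by
    intro X hX
    obtain ⟨pp, hppA, hppX⟩ := (h𝒯sub hX).1
    exact ⟨pp, hppA, hppX⟩
  choose fpick hfA hfX using hpick
  have hA₁A : {pp | ∃ X, ∃ h : X ∈ 𝒯, pp = fpick X h} ⊆ A := by
    rintro pp ⟨X, h, rfl⟩; exact hfA X h
  have hA₁X𝒯 : ∀ pp ∈ {pp | ∃ X, ∃ h : X ∈ 𝒯, pp = fpick X h}, pp.X ∈ 𝒯 := by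
    rintro pp ⟨X, h, rfl⟩; rw [hfX X h]; exact h
  have hA₁unc : ¬ {pp | ∃ X, ∃ h : X ∈ 𝒯, pp = fpick X h}.Countable := by
    intro hc
    apply h𝒯unc
    have hsub : 𝒯 ⊆ Cond.X '' {pp | ∃ X, ∃ h : X ∈ 𝒯, pp = fpick X h} :=
      fun X hX => ⟨fpick X hX, ⟨X, hX, rfl⟩, hfX X hX⟩
    exact (hc.image _).mono hsub
  have hA₁inj : ∀ pp ∈ {pp | ∃ X, ∃ h : X ∈ 𝒯, pp = fpick X h},
      ∀ qq ∈ {pp | ∃ X, ∃ h : X ∈ 𝒯, pp = fpick X h}, pp.X = qq.X → pp = qq := by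
    rintro pp ⟨X1, h1, rfl⟩ qq ⟨X2, h2, rfl⟩ hXeq
    rw [hfX X1 h1, hfX X2 h2] at hXeq
    subst hXeq
    rfl
  have hroot : ∀ pp ∈ {pp | ∃ X, ∃ h : X ∈ 𝒯, pp = fpick X h},
      ∀ qq ∈ {pp | ∃ X, ∃ h : X ∈ 𝒯, pp = fpick X h}, pp ≠ qq → pp.X ∩ qq.X = R := by
    intro pp hpp qq hqq hne
    exact hR pp.X (hA₁X𝒯 pp hpp) qq.X (hA₁X𝒯 qq hqq)
      (fun h => hne (hA₁inj pp hpp qq hqq h))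
  have hother : ∀ pp ∈ {pp | ∃ X, ∃ h : X ∈ 𝒯, pp = fpick X h},
      ∃ qq ∈ {pp | ∃ X, ∃ h : X ∈ 𝒯, pp = fpick X h}, qq ≠ pp := by
    intro pp hpp
    by_contra h
    push_neg at h
    exact hA₁unc ((Set.countable_singleton pp).mono
      (fun qq hqq => Set.mem_singleton_iff.2 (h qq hqq)))
  have hRsub : ∀ pp ∈ {pp | ∃ X, ∃ h : X ∈ 𝒯, pp = fpick X h}, R ⊆ pp.X := by
    intro pp hpp
    obtain ⟨qq, hqq, hne⟩ := hother pp hpp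
    rw [← hroot pp hpp qq hqq (fun h => hne h.symm)]
    exact Set.inter_subset_left
  have hRfin : R.Finite := by
    rcases Set.eq_empty_or_nonempty {pp | ∃ X, ∃ h : X ∈ 𝒯, pp = fpick X h} with he | ⟨pp, hpp⟩
    · exact absurd (he ▸ Set.countable_empty) hA₁unc
    · exact pp.finite.subset (hRsub pp hpp)
  -- a countable bound γ on sub-ω₁ root levels and root F-values
  have hGfin : Set.Finite ((fun w : Ordinal × Ordinal => w.1) ''
      {w | w ∈ R ∧ w.1 < (Cardinal.aleph 1).ord} ∪
      (fun x : (Ordinal × Ordinal) × (Ordinal × Ordinal) => F x.1.2 x.2.2) '' (R ×ˢ R)) :=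
    ((hRfin.subset (fun w hw => hw.1)).image _).union ((hRfin.prod hRfin).image _)
  have ho1pos : (0 : Ordinal) < (Cardinal.aleph 1).ord := by
    rw [Cardinal.lt_ord, Ordinal.card_zero]
    exact Cardinal.aleph0_pos.trans_le (Cardinal.aleph0_le_aleph 1)
  obtain ⟨γ, hγlt, hγbd⟩ := exists_bound_of_finite _ hGfin _ ho1pos (by
    rintro x (⟨w, ⟨_, hw⟩, rfl⟩ | ⟨pr, _, rfl⟩)
    · exact hw
    · exact hFrange _ _)
  have hγR : ∀ w ∈ R, w.1 < (Cardinal.aleph 1).ord → w.1 ≤ γ :=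
    fun w hw h1 => hγbd _ (Or.inl ⟨w, ⟨hw, h1⟩, rfl⟩)
  have hγF : ∀ s ∈ R, ∀ t ∈ R, F s.2 t.2 ≤ γ :=
    fun s hs t ht => hγbd _ (Or.inr ⟨(s, t), ⟨hs, ht⟩, rfl⟩)
  -- values of i on root pairs are bounded
  have hibound : ∀ pp ∈ {pp | ∃ X, ∃ h : X ∈ 𝒯, pp = fpick X h}, ∀ s ∈ R, ∀ t ∈ R, s ≠ t →
      ∀ v ∈ pp.i s t, v.1 ≤ γ ∧ v.2 < (Cardinal.aleph 0).ord := by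
    intro pp hpp s hs t ht hst v hv
    have hsX : s ∈ pp.X := hRsub pp hpp hs
    have htX : t ∈ pp.X := hRsub pp hpp ht
    obtain ⟨hvX, hvs, hvt⟩ := CCC.lower_of_mem_i pp hsX htX hst hv
    have hlev : v.1 ≤ γ := by
      by_cases hs1 : s.1 < (Cardinal.aleph 1).ord
      · by_cases hvseq : v = s
        · exact hvseq ▸ hγR s hs hs1
        · exact ((pp.lt_levels v hvX s hsX hvs hvseq).le).trans (hγR s hs hs1)
      · by_cases ht1 : t.1 < (Cardinal.aleph 1).ord
        · by_cases hvteq : v = t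
          · exact hvteq ▸ hγR t ht ht1
          · exact ((pp.lt_levels v hvX t htX hvt hvteq).le).trans (hγR t ht ht1)
        · have hs1' : s.1 = (Cardinal.aleph 1).ord :=
            (pp.subT hsX).elim (fun h => absurd h.1 hs1) And.left
          have ht1' : t.1 = (Cardinal.aleph 1).ord :=
            (pp.subT htX).elim (fun h => absurd h.1 ht1) And.left
          exact (pp.P4 s hsX t htX hst hs1' ht1' v hv).le.trans (hγF s hs t ht)
    refine ⟨hlev, ?_⟩
    rcases pp.subT hvX with h | h
    · exact h.2
    · exact absurd (h.1 ▸ hlev.trans_lt hγlt) (lt_irrefl _)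
  set A₁ : Set (Cond lam F) := {pp | ∃ X, ∃ h : X ∈ 𝒯, pp = fpick X h} with hA₁def
  -- countability of the bounded region
  have hCγc : Set.Countable {v : Ordinal × Ordinal | v.1 ≤ γ ∧
      v.2 < (Cardinal.aleph 0).ord} := by
    have h1 : (Set.Iic γ).Countable := by
      have hsucc : γ + 1 < (Cardinal.aleph 1).ord := by
        have hlim := Cardinal.isSuccLimit_ord (Cardinal.aleph0_le_aleph 1)
        rw [Ordinal.add_one_eq_succ]
        exact hlim.succ_lt hγlt
      exact (countable_Iio_o1 hsucc).mono (fun x hx => by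
        rw [Set.mem_Iio, Ordinal.add_one_eq_succ]
        exact Order.lt_succ_iff.2 hx)
    have h2 : (Set.Iio (Cardinal.aleph 0).ord).Countable := by
      refine countable_Iio_o1 (Cardinal.ord_lt_ord.2 ?_)
      rw [Cardinal.aleph_zero]
      exact Cardinal.aleph0_lt_aleph_one
    exact (h1.prod h2).mono (fun v hv => Set.mem_prod.2 ⟨hv.1, hv.2⟩)
  -- make the order constant on the root
  obtain ⟨c₃, hc₃⟩ := exists_uncountable_fiber A₁ hA₁unc
    (fun pp => {x : (Ordinal × Ordinal) × (Ordinal × Ordinal) |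
      x.1 ∈ R ∧ x.2 ∈ R ∧ pp.le x.1 x.2})
    {S | S ⊆ R ×ˢ R} ((hRfin.prod hRfin).finite_subsets.countable)
    (fun pp _ x hx => ⟨hx.1, hx.2.1⟩)
  have hleR : ∀ pp ∈ {x | x ∈ A₁ ∧ {x_1 : (Ordinal × Ordinal) × (Ordinal × Ordinal) |
        x_1.1 ∈ R ∧ x_1.2 ∈ R ∧ x.le x_1.1 x_1.2} = c₃},
      ∀ qq ∈ {x | x ∈ A₁ ∧ {x_1 : (Ordinal × Ordinal) × (Ordinal × Ordinal) |
        x_1.1 ∈ R ∧ x_1.2 ∈ R ∧ x.le x_1.1 x_1.2} = c₃},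
      ∀ s ∈ R, ∀ t ∈ R, (pp.le s t ↔ qq.le s t) := by
    intro pp hpp qq hqq s hs t ht
    constructor
    · intro h
      have hm : (s, t) ∈ {x : (Ordinal × Ordinal) × (Ordinal × Ordinal) |
          x.1 ∈ R ∧ x.2 ∈ R ∧ pp.le x.1 x.2} := ⟨hs, ht, h⟩
      rw [hpp.2, ← hqq.2] at hm
      exact hm.2.2
    · intro h
      have hm : (s, t) ∈ {x : (Ordinal × Ordinal) × (Ordinal × Ordinal) |
          x.1 ∈ R ∧ x.2 ∈ R ∧ qq.le x.1 x.2} := ⟨hs, ht, h⟩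
      rw [hqq.2, ← hpp.2] at hm
      exact hm.2.2
  set A₂ : Set (Cond lam F) := {x | x ∈ A₁ ∧ {x_1 : (Ordinal × Ordinal) × (Ordinal × Ordinal) |
    x_1.1 ∈ R ∧ x_1.2 ∈ R ∧ x.le x_1.1 x_1.2} = c₃} with hA₂def
  have hA₂sub : A₂ ⊆ A₁ := fun pp hpp => hpp.1
  -- make i constant on root pairs
  obtain ⟨c₄, hc₄⟩ := exists_uncountable_fiber A₂ hc₃
    (fun pp => {y : ((Ordinal × Ordinal) × (Ordinal × Ordinal)) × (Ordinal × Ordinal) |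
      y.1.1 ∈ R ∧ y.1.2 ∈ R ∧ y.1.1 ≠ y.1.2 ∧ y.2 ∈ pp.i y.1.1 y.1.2})
    {S | S.Finite ∧ S ⊆ (R ×ˢ R) ×ˢ {v : Ordinal × Ordinal | v.1 ≤ γ ∧
      v.2 < (Cardinal.aleph 0).ord}}
    (Set.countable_setOf_finite_subset (((hRfin.countable).prod (hRfin.countable)).prod hCγc))
    (by
      intro pp hpp
      constructor
      · refine Set.Finite.subset ((hRfin.prod hRfin).prod pp.finite) ?_
        intro y hy
        refine ⟨⟨hy.1, hy.2.1⟩, ?_⟩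
        exact pp.i_sub y.1.1 (hRsub pp (hA₂sub hpp) hy.1) y.1.2 (hRsub pp (hA₂sub hpp) hy.2.1)
          hy.2.2.1 hy.2.2.2
      · intro y hy
        exact ⟨⟨hy.1, hy.2.1⟩, hibound pp (hA₂sub hpp) y.1.1 hy.1 y.1.2 hy.2.1 hy.2.2.1
          y.2 hy.2.2.2⟩)
  have hiR : ∀ pp ∈ {x | x ∈ A₂ ∧ {y : ((Ordinal × Ordinal) × (Ordinal × Ordinal)) ×
        (Ordinal × Ordinal) | y.1.1 ∈ R ∧ y.1.2 ∈ R ∧ y.1.1 ≠ y.1.2 ∧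
        y.2 ∈ x.i y.1.1 y.1.2} = c₄},
      ∀ qq ∈ {x | x ∈ A₂ ∧ {y : ((Ordinal × Ordinal) × (Ordinal × Ordinal)) ×
        (Ordinal × Ordinal) | y.1.1 ∈ R ∧ y.1.2 ∈ R ∧ y.1.1 ≠ y.1.2 ∧
        y.2 ∈ x.i y.1.1 y.1.2} = c₄},
      ∀ s ∈ R, ∀ t ∈ R, s ≠ t → pp.i s t = qq.i s t := by
    intro pp hpp qq hqq s hs t ht hst
    ext v
    constructor
    · intro h
      have hm : ((s, t), v) ∈ {y : ((Ordinal × Ordinal) × (Ordinal × Ordinal)) ×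
          (Ordinal × Ordinal) | y.1.1 ∈ R ∧ y.1.2 ∈ R ∧ y.1.1 ≠ y.1.2 ∧
          y.2 ∈ pp.i y.1.1 y.1.2} := ⟨hs, ht, hst, h⟩
      rw [hpp.2, ← hqq.2] at hm
      exact hm.2.2.2
    · intro h
      have hm : ((s, t), v) ∈ {y : ((Ordinal × Ordinal) × (Ordinal × Ordinal)) ×
          (Ordinal × Ordinal) | y.1.1 ∈ R ∧ y.1.2 ∈ R ∧ y.1.1 ≠ y.1.2 ∧
          y.2 ∈ qq.i y.1.1 y.1.2} := ⟨hs, ht, hst, h⟩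
      rw [hqq.2, ← hpp.2] at hm
      exact hm.2.2.2
  set A₃ : Set (Cond lam F) := {x | x ∈ A₂ ∧ {y : ((Ordinal × Ordinal) × (Ordinal × Ordinal)) ×
    (Ordinal × Ordinal) | y.1.1 ∈ R ∧ y.1.2 ∈ R ∧ y.1.1 ≠ y.1.2 ∧
    y.2 ∈ x.i y.1.1 y.1.2} = c₄} with hA₃def
  have hA₃sub : A₃ ⊆ A₂ := fun pp hpp => hpp.1
  have hωc : (Set.Iio (Cardinal.aleph 0).ord).Countable := by
    refine countable_Iio_o1 (Cardinal.ord_lt_ord.2 ?_)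
    rw [Cardinal.aleph_zero]
    exact Cardinal.aleph0_lt_aleph_one
  -- separate the non-root levels below ω₁
  obtain ⟨A₄, hA₄sub, hA₄unc, hA₄pw⟩ := exists_uncountable_pairwise A₃ hc₄
    (fun pp qq => ∃ s, s ∈ pp.X ∧ s ∉ R ∧ s.1 < (Cardinal.aleph 1).ord ∧
      ∃ t, t ∈ qq.X ∧ t ∉ R ∧ t.1 = s.1)
    (by
      intro pp hpp
      have hV : ∀ t : Ordinal × Ordinal, {qq | qq ∈ A₃ ∧ t ∈ qq.X ∧ t ∉ R}.Countable := by
        intro t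
        refine Set.Subsingleton.countable ?_
        intro q1 hq1 q2 hq2
        by_contra hne
        have := hroot q1 (hA₂sub (hA₃sub hq1.1)) q2 (hA₂sub (hA₃sub hq2.1)) hne
        exact hq1.2.2 (this ▸ ⟨hq1.2.1, hq2.2.1⟩)
      have hsub : {y | y ∈ A₃ ∧ ((∃ s, s ∈ pp.X ∧ s ∉ R ∧ s.1 < (Cardinal.aleph 1).ord ∧
            ∃ t, t ∈ y.X ∧ t ∉ R ∧ t.1 = s.1) ∨ (∃ s, s ∈ y.X ∧ s ∉ R ∧
            s.1 < (Cardinal.aleph 1).ord ∧ ∃ t, t ∈ pp.X ∧ t ∉ R ∧ t.1 = s.1))} ⊆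
          ⋃ u ∈ {u | u ∈ pp.X ∧ u ∉ R ∧ u.1 < (Cardinal.aleph 1).ord},
          ⋃ t ∈ {t : Ordinal × Ordinal | t.1 = u.1 ∧ t.2 < (Cardinal.aleph 0).ord},
          {qq | qq ∈ A₃ ∧ t ∈ qq.X ∧ t ∉ R} := by
        rintro qq ⟨hqq, ⟨s, hs1, hs2, hs3, t, ht1, ht2, ht3⟩ | ⟨s, hs1, hs2, hs3, t, ht1, ht2, ht3⟩⟩
        · have ht4 : t.2 < (Cardinal.aleph 0).ord :=
            (qq.subT ht1).elim And.right (fun h => absurd (h.1 ▸ (ht3 ▸ hs3)) (lt_irrefl _))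
          exact Set.mem_biUnion ⟨hs1, hs2, hs3⟩ (Set.mem_biUnion ⟨ht3, ht4⟩ ⟨hqq, ht1, ht2⟩)
        · have hs4 : s.2 < (Cardinal.aleph 0).ord :=
            (qq.subT hs1).elim And.right (fun h => absurd (h.1 ▸ hs3) (lt_irrefl _))
          have ht3' : t.1 < (Cardinal.aleph 1).ord := ht3 ▸ hs3
          exact Set.mem_biUnion ⟨ht1, ht2, ht3'⟩
            (Set.mem_biUnion ⟨ht3.symm, hs4⟩ ⟨hqq, hs1, hs2⟩)
      refine Set.Countable.mono hsub ?_
      refine Set.Countable.biUnion ((pp.finite.subset (fun u hu => hu.1)).countable) ?_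
      intro u _
      refine Set.Countable.biUnion ?_ (fun t _ => hV t)
      have : {t : Ordinal × Ordinal | t.1 = u.1 ∧ t.2 < (Cardinal.aleph 0).ord} ⊆
          ({u.1} : Set Ordinal) ×ˢ (Set.Iio (Cardinal.aleph 0).ord) :=
        fun t ht => Set.mem_prod.2 ⟨ht.1, ht.2⟩
      exact ((Set.countable_singleton u.1).prod hωc).mono this)
  -- make the top-level trace constant in size
  obtain ⟨n₁, hn₁fib⟩ := exists_uncountable_fiber A₄ hA₄unc
    (fun pp => {x : Ordinal | ((Cardinal.aleph 1).ord, x) ∈ pp.X ∧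
      ((Cardinal.aleph 1).ord, x) ∉ R}.ncard)
    (Set.univ : Set ℕ) Set.countable_univ (fun _ _ => Set.mem_univ _)
  set A₅ : Set (Cond lam F) := {x | x ∈ A₄ ∧ {x_1 : Ordinal |
    ((Cardinal.aleph 1).ord, x_1) ∈ x.X ∧ ((Cardinal.aleph 1).ord, x_1) ∉ R}.ncard = n₁}
    with hA₅def
  have hA₅sub : A₅ ⊆ A₄ := fun pp hpp => hpp.1
  have hA₅A₁ : A₅ ⊆ A₁ := fun pp hpp => hA₂sub (hA₃sub (hA₄sub (hA₅sub hpp)))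
  have hA₅A : A₅ ⊆ A := fun pp hpp => hA₁A (hA₅A₁ hpp)
  have hapfin : ∀ pp : Cond lam F, {x : Ordinal | ((Cardinal.aleph 1).ord, x) ∈ pp.X ∧
      ((Cardinal.aleph 1).ord, x) ∉ R}.Finite := by
    intro pp
    refine (pp.finite.image Prod.snd).subset ?_
    intro x hx
    exact ⟨((Cardinal.aleph 1).ord, x), hx.1, rfl⟩
  -- the amalgamation hypotheses valid for any distinct pair from A₅
  have hH2 : ∀ pp ∈ A₅, ∀ qq ∈ A₅, pp ≠ qq → ∀ s t, s ∈ pp.X → s ∈ qq.X → t ∈ pp.X →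
      t ∈ qq.X → (pp.le s t ↔ qq.le s t) := by
    intro pp hpp qq hqq hne s t h1 h2 h3 h4
    have hrt := hroot pp (hA₅A₁ hpp) qq (hA₅A₁ hqq) hne
    exact hleR pp (hA₃sub (hA₄sub (hA₅sub hpp))) qq (hA₃sub (hA₄sub (hA₅sub hqq)))
      s (hrt ▸ ⟨h1, h2⟩) t (hrt ▸ ⟨h3, h4⟩)
  have hH3 : ∀ pp ∈ A₅, ∀ qq ∈ A₅, pp ≠ qq → ∀ s t, s ∈ pp.X → s ∈ qq.X → t ∈ pp.X →
      t ∈ qq.X → s ≠ t → pp.i s t = qq.i s t := by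
    intro pp hpp qq hqq hne s t h1 h2 h3 h4 hst
    have hrt := hroot pp (hA₅A₁ hpp) qq (hA₅A₁ hqq) hne
    exact hiR pp (hA₄sub (hA₅sub hpp)) qq (hA₄sub (hA₅sub hqq))
      s (hrt ▸ ⟨h1, h2⟩) t (hrt ▸ ⟨h3, h4⟩) hst
  have hH4 : ∀ pp ∈ A₅, ∀ qq ∈ A₅, pp ≠ qq → ∀ s t, s ∈ pp.X → s ∉ qq.X → t ∈ qq.X →
      t ∉ pp.X → s.1 = t.1 → ¬ s.1 < (Cardinal.aleph 1).ord := by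
    intro pp hpp qq hqq hne s t h1 h2 h3 h4 heq hlt
    refine hA₄pw pp (hA₅sub hpp) qq (hA₅sub hqq) hne ?_
    exact ⟨s, h1, fun hsR => h2 (hRsub qq (hA₅A₁ hqq) hsR), hlt,
      t, h3, fun htR => h4 (hRsub pp (hA₅A₁ hpp) htR), heq.symm⟩
  have hnotR : ∀ pp ∈ A₅, ∀ qq ∈ A₅, ∀ s, s ∈ pp.X → s ∉ qq.X →
      s.1 = (Cardinal.aleph 1).ord → s.2 ∈ {x : Ordinal |
        ((Cardinal.aleph 1).ord, x) ∈ pp.X ∧ ((Cardinal.aleph 1).ord, x) ∉ R} := by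
    intro pp hpp qq hqq s h1 h2 hs1
    have hse : ((Cardinal.aleph 1).ord, s.2) = s := by rw [← hs1]
    refine ⟨hse ▸ h1, fun hsR => h2 ?_⟩
    exact hse ▸ hRsub qq (hA₅A₁ hqq) hsR
  by_cases hn₁0 : n₁ = 0
  · -- no top-level non-root points: any two distinct conditions are compatible
    obtain ⟨pp, hpp, qq, hqq, hne⟩ :=
      Set.not_subsingleton_iff.1 (fun h => hn₁fib h.countable)
    refine hA pp (hA₅A hpp) qq (hA₅A hqq) hne
      (CCC.amalg pp qq (hH2 pp hpp qq hqq hne) (hH3 pp hpp qq hqq hne) (hH4 pp hpp qq hqq hne) ?_)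
    intro s t h1 h2 h3 h4 hs1 ht1 w hw1 hw2 hw3
    exfalso
    have hmem := hnotR pp hpp qq hqq s h1 h2 hs1
    have hempty : {x : Ordinal | ((Cardinal.aleph 1).ord, x) ∈ pp.X ∧
        ((Cardinal.aleph 1).ord, x) ∉ R} = ∅ := by
      have h5 := hpp.2
      rw [hn₁0] at h5
      exact (Set.ncard_eq_zero (hapfin pp)).1 h5
    rw [hempty] at hmem
    exact hmem
  · -- use strong unboundedness
    have hdisj : ∀ pp ∈ A₅, ∀ qq ∈ A₅, pp ≠ qq → ∀ x : Ordinal,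
        x ∈ {x : Ordinal | ((Cardinal.aleph 1).ord, x) ∈ pp.X ∧
          ((Cardinal.aleph 1).ord, x) ∉ R} →
        x ∈ {x : Ordinal | ((Cardinal.aleph 1).ord, x) ∈ qq.X ∧
          ((Cardinal.aleph 1).ord, x) ∉ R} → False := by
      intro pp hpp qq hqq hne x hx1 hx2
      have hrt := hroot pp (hA₅A₁ hpp) qq (hA₅A₁ hqq) hne
      exact hx1.2 (hrt ▸ ⟨hx1.1, hx2.1⟩)
    set apS : Cond lam F → Set Ordinal := fun pp => {x : Ordinal |
      ((Cardinal.aleph 1).ord, x) ∈ pp.X ∧ ((Cardinal.aleph 1).ord, x) ∉ R} with hapSdef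
    have hinj5 : ∀ pp ∈ A₅, ∀ qq ∈ A₅, apS pp = apS qq → pp = qq := by
      intro pp hpp qq hqq heq
      by_contra hne
      obtain ⟨x, hx⟩ := Set.nonempty_of_ncard_ne_zero (s := apS pp) (hpp.2.symm ▸ hn₁0)
      exact hdisj pp hpp qq hqq hne x hx (show x ∈ apS qq from heq ▸ hx)
    have huncB : ¬ (apS '' A₅).Countable := by
      intro hc
      apply fun h => hn₁fib h
      have hsub : A₅ ⊆ ⋃ b ∈ apS '' A₅, {pp | pp ∈ A₅ ∧ apS pp = b} :=
        fun pp hpp => Set.mem_biUnion ⟨pp, hpp, rfl⟩ ⟨hpp, rfl⟩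
      refine (hc.biUnion fun b _ => ?_).mono hsub
      refine Set.Subsingleton.countable ?_
      intro q1 hq1 q2 hq2
      exact hinj5 q1 hq1.1 q2 hq2.1 (hq1.2.trans hq2.2.symm)
    obtain ⟨B', hB'sub, hB'card⟩ :=
      Cardinal.le_mk_iff_exists_subset.1 (uncountable_of_aleph_one_le.1 huncB)
    obtain ⟨a, haB', b, hbB', hab, habF⟩ := hF γ hγlt n₁ B'
      (by
        intro aa haa
        obtain ⟨pp, hpp, rfl⟩ := hB'sub haa
        refine ⟨?_, hapfin pp, hpp.2⟩
        intro x hx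
        rcases pp.subT hx.1 with h | h
        · exact absurd h.1 (lt_irrefl _)
        · exact h.2)
      (by
        intro aa haa bb hbb hne
        obtain ⟨pp, hpp, rfl⟩ := hB'sub haa
        obtain ⟨qq, hqq, rfl⟩ := hB'sub hbb
        have hpqne : pp ≠ qq := fun h => hne (h ▸ rfl)
        exact Set.disjoint_left.2 (fun x hxa hxb => hdisj pp hpp qq hqq hpqne x hxa hxb))
      hB'card
    obtain ⟨pp, hpp, rfl⟩ := hB'sub haB'
    obtain ⟨qq, hqq, rfl⟩ := hB'sub hbB'
    have hpqne : pp ≠ qq := fun h => hab (h ▸ rfl)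
    refine hA pp (hA₅A hpp) qq (hA₅A hqq) hpqne
      (CCC.amalg pp qq (hH2 pp hpp qq hqq hpqne) (hH3 pp hpp qq hqq hpqne)
        (hH4 pp hpp qq hqq hpqne) ?_)
    intro s t h1 h2 h3 h4 hs1 ht1 w hw1 hw2 hw3
    have hsmem : s.2 ∈ apS pp := hnotR pp hpp qq hqq s h1 h2 hs1
    have htmem : t.2 ∈ apS qq := hnotR qq hqq pp hpp t h3 h4 ht1
    have hFst : γ < F s.2 t.2 := habF s.2 hsmem t.2 htmem
    have hwR : w ∈ R := (hroot pp (hA₅A₁ hpp) qq (hA₅A₁ hqq) hpqne) ▸ ⟨hw1, hw2⟩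
    have hwγ : w.1 ≤ γ := hγR w hwR hw3
    refine ⟨lt_of_le_of_lt hwγ hFst, ?_⟩
    rw [hFsymm t.2 s.2]
    exact lt_of_le_of_lt hwγ hFst
end

section
/- (Density/extension lemma) Let P be the finite-condition forcing for adding an ⟨ω⟩_{ω_1}⌢⟨λ⟩-poset as above. For every condition p = ⟨X,⪯,i⟩ ∈ P, every t ∈ X, every α < π(t), and every n < ω, there is a condition p' = ⟨X',⪯',i'⟩ ≤ p and an element s ∈ X' \ X with π(s) = α and ξ(s) > n such that for all x ∈ X, s ⪯' x if and only if t ⪯' x. -/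
open Cardinal

lemma Cond.ext_trans {lam : Cardinal.{0}} {F : Ordinal → Ordinal → Ordinal}
    {p q r : Cond lam F} (h1 : q.ext p) (h2 : r.ext q) : r.ext p := by
  obtain ⟨hX1, hle1, hi1⟩ := h1
  obtain ⟨hX2, hle2, hi2⟩ := h2
  exact ⟨hX1.trans hX2,
    fun a ha b hb => (hle1 a ha b hb).trans (hle2 a (hX1 ha) b (hX1 hb)),
    fun a ha b hb hab => (hi1 a ha b hb hab).trans (hi2 a (hX1 ha) b (hX1 hb) hab)⟩

lemma single_step {lam : Cardinal.{0}} {F : Ordinal → Ordinal → Ordinal}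
    (p : Cond lam F) (t : Ordinal × Ordinal) (ht : t ∈ p.X)
    (α : Ordinal) (hα : α < t.1) (hsucc : ∀ β, t.1 = β + 1 → β = α) (n : ℕ) :
    ∃ p' : Cond lam F, p'.ext p ∧ ∃ s ∈ p'.X, s ∉ p.X ∧ s.1 = α ∧ (n : Ordinal) < s.2 ∧
      ∀ x ∈ p.X, (p'.le s x ↔ p'.le t x) := by
  classical
  have ht1 : t.1 ≤ (Cardinal.aleph 1).ord := by
    rcases p.subT ht with h | h
    · exact h.1.le
    · exact h.1.le
  have hα1 : α < (Cardinal.aleph 1).ord := lt_of_lt_of_le hα ht1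
  -- choice of a fresh second coordinate
  set B : Set Ordinal := (Prod.snd '' {x ∈ p.X | x.1 = α}) ∪ {(n : Ordinal)} with hBdef
  have hBfin : B.Finite :=
    ((p.finite.subset (Set.sep_subset _ _)).image _).union (Set.finite_singleton _)
  have hBne : B.Nonempty := ⟨(n : Ordinal), Or.inr rfl⟩
  have hm : sSup B ∈ B := hBne.csSup_mem hBfin
  set c : Ordinal := sSup B + 1 with hcdef
  have homega : (Cardinal.aleph 0).ord = Ordinal.omega0 := by
    rw [Cardinal.aleph_zero, Cardinal.ord_aleph0]
  have hBlt : ∀ b ∈ B, b < (Cardinal.aleph 0).ord := by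
    rintro b (⟨x, ⟨hxX, hx1⟩, rfl⟩ | rfl)
    · rcases p.subT hxX with h | h
      · exact h.2
      · rw [hx1] at h; exact absurd h.1 (ne_of_lt hα1)
    · rw [homega]; exact Ordinal.nat_lt_omega0 n
  have hclt : c < (Cardinal.aleph 0).ord := by
    have h1 := hBlt _ hm
    rw [homega] at h1 ⊢
    rw [hcdef, Ordinal.add_one_eq_succ]
    exact Ordinal.isSuccLimit_omega0.succ_lt h1
  have hmc : sSup B < c := by
    rw [hcdef, Ordinal.add_one_eq_succ]; exact Order.lt_succ _
  have hnc : (n : Ordinal) < c :=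
    lt_of_le_of_lt (le_csSup hBfin.bddAbove (Or.inr rfl)) hmc
  set s : Ordinal × Ordinal := (α, c) with hsdef
  have hsnot : s ∉ p.X := by
    intro h
    have : c ∈ B := Or.inl ⟨s, ⟨h, rfl⟩, rfl⟩
    exact absurd (le_csSup hBfin.bddAbove this) (not_le.2 hmc)
  have hts : t ≠ s := fun h => hsnot (h ▸ ht)
  -- the new order
  set le' : (Ordinal × Ordinal) → (Ordinal × Ordinal) → Prop := fun u v =>
    (u ∈ p.X ∧ v ∈ p.X ∧ p.le u v) ∨ (u = s ∧ v = s) ∨ (u = s ∧ v ∈ p.X ∧ p.le t v)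
    with hledef
  have le'_def : ∀ u v, le' u v ↔
      ((u ∈ p.X ∧ v ∈ p.X ∧ p.le u v) ∨ (u = s ∧ v = s) ∨ (u = s ∧ v ∈ p.X ∧ p.le t v)) :=
    fun u v => by rw [hledef]
  -- the new infimum function
  set i' : (Ordinal × Ordinal) → (Ordinal × Ordinal) → Set (Ordinal × Ordinal) := fun u v =>
    if u ∈ p.X ∧ v ∈ p.X then p.i u v
    else if le' u v then {u} else if le' v u then {v} else (∅ : Set (Ordinal × Ordinal))
    with hidef
  have i'_def : ∀ u v, i' u v =
      (if u ∈ p.X ∧ v ∈ p.X then p.i u v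
       else if le' u v then {u} else if le' v u then {v} else (∅ : Set (Ordinal × Ordinal))) :=
    fun u v => by rw [hidef]
  -- basic facts about le'
  have hXle : ∀ u ∈ p.X, ∀ v, (le' u v ↔ v ∈ p.X ∧ p.le u v) := by
    intro u hu v
    rw [le'_def]
    constructor
    · rintro (⟨_, hv, h⟩ | ⟨h1, _⟩ | ⟨h1, _, _⟩)
      · exact ⟨hv, h⟩
      · exact absurd (h1 ▸ hu) hsnot
      · exact absurd (h1 ▸ hu) hsnot
    · rintro ⟨hv, h⟩; exact Or.inl ⟨hu, hv, h⟩
  have hsle : ∀ v, (le' s v ↔ v = s ∨ (v ∈ p.X ∧ p.le t v)) := by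
    intro v
    rw [le'_def]
    constructor
    · rintro (⟨hsX, _, _⟩ | ⟨_, h⟩ | ⟨_, hv, h⟩)
      · exact absurd hsX hsnot
      · exact Or.inl h
      · exact Or.inr ⟨hv, h⟩
    · rintro (rfl | ⟨hv, h⟩)
      · exact Or.inr (Or.inl ⟨rfl, rfl⟩)
      · exact Or.inr (Or.inr ⟨rfl, hv, h⟩)
  have h_to_s : ∀ u, le' u s → u = s := by
    intro u h
    rw [le'_def] at h
    rcases h with ⟨_, hsX, _⟩ | ⟨h1, _⟩ | ⟨h1, hsX, _⟩
    · exact absurd hsX hsnot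
    · exact h1
    · exact absurd hsX hsnot
  have hss : le' s s := (hsle s).2 (Or.inl rfl)
  have htlev : ∀ v ∈ p.X, p.le t v → t.1 ≤ v.1 := by
    intro v hv h
    by_cases hv' : t = v
    · exact le_of_eq (by rw [hv'])
    · exact (p.lt_levels t ht v hv h hv').le
  have antisym' : ∀ u v, le' u v → le' v u → u = v := by
    intro u v h1 h2
    rw [le'_def] at h1 h2
    rcases h1 with ⟨hu, hv, h⟩ | ⟨h1a, h1b⟩ | ⟨h1a, hv, h⟩
    · rcases h2 with ⟨_, _, h'⟩ | ⟨h2a, _⟩ | ⟨h2a, _, _⟩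
      · exact p.le_antisymm u hu v hv h h'
      · exact absurd (h2a ▸ hv) hsnot
      · exact absurd (h2a ▸ hv) hsnot
    · rw [h1a, h1b]
    · rcases h2 with ⟨_, hsX, _⟩ | ⟨h2a, _⟩ | ⟨_, hsX, _⟩
      · exact absurd (h1a ▸ hsX) hsnot
      · rw [h1a, h2a]
      · exact absurd (h1a ▸ hsX) hsnot
  have trans' : ∀ u v w, le' u v → le' v w → le' u w := by
    intro u v w h1 h2
    rw [le'_def] at h1 h2 ⊢
    rcases h1 with ⟨hu, hv, h⟩ | ⟨h1a, h1b⟩ | ⟨h1a, hv, h⟩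
    · rcases h2 with ⟨_, hw, h'⟩ | ⟨h2a, _⟩ | ⟨h2a, _, _⟩
      · exact Or.inl ⟨hu, hw, p.le_trans u hu v hv w hw h h'⟩
      · exact absurd (h2a ▸ hv) hsnot
      · exact absurd (h2a ▸ hv) hsnot
    · rcases h2 with ⟨hvX, _, _⟩ | ⟨_, h2b⟩ | ⟨_, hw, h'⟩
      · exact absurd (h1b ▸ hvX) hsnot
      · exact Or.inr (Or.inl ⟨h1a, h2b⟩)
      · exact Or.inr (Or.inr ⟨h1a, hw, h'⟩)
    · rcases h2 with ⟨_, hw, h'⟩ | ⟨h2a, _⟩ | ⟨h2a, _, _⟩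
      · exact Or.inr (Or.inr ⟨h1a, hw, p.le_trans t ht v hv w hw h h'⟩)
      · exact absurd (h2a ▸ hv) hsnot
      · exact absurd (h2a ▸ hv) hsnot
  -- values of the new infimum function
  have hiX : ∀ a b, a ∈ p.X → b ∈ p.X → i' a b = p.i a b := by
    intro a b ha hb; rw [i'_def, if_pos ⟨ha, hb⟩]
  have hi1 : ∀ a b, ¬(a ∈ p.X ∧ b ∈ p.X) → le' a b → i' a b = {a} := by
    intro a b h h1; rw [i'_def, if_neg h, if_pos h1]
  have hi2 : ∀ a b, ¬(a ∈ p.X ∧ b ∈ p.X) → ¬le' a b → le' b a → i' a b = {b} := by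
    intro a b h h1 h2; rw [i'_def, if_neg h, if_neg h1, if_pos h2]
  have hi0 : ∀ a b, ¬(a ∈ p.X ∧ b ∈ p.X) → ¬le' a b → ¬le' b a → i' a b = ∅ := by
    intro a b h h1 h2; rw [i'_def, if_neg h, if_neg h1, if_neg h2]
  -- the new condition
  refine ⟨⟨insert s p.X, p.finite.insert s, ?_, le', ?_, ?_, ?_, ?_, i', ?_, ?_, ?_, ?_, ?_, ?_⟩,
    ?_, ?_⟩
  · -- subT
    refine Set.insert_subset ?_ p.subT
    exact Or.inl ⟨hα1, hclt⟩
  · -- le_refl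
    rintro u hu
    rcases hu with rfl | hu
    · exact hss
    · exact (hXle u hu u).2 ⟨hu, p.le_refl u hu⟩
  · -- le_antisymm
    intro u _ v _ h1 h2; exact antisym' u v h1 h2
  · -- le_trans
    intro u _ v _ w _ h1 h2; exact trans' u v w h1 h2
  · -- lt_levels
    intro u _ v _ h hne
    rw [le'_def] at h
    rcases h with ⟨hu, hv, h⟩ | ⟨h1a, h1b⟩ | ⟨h1a, hv, h⟩
    · exact p.lt_levels u hu v hv h hne
    · exact absurd (h1a.trans h1b.symm) hne
    · rw [h1a]; exact lt_of_lt_of_le hα (htlev v hv h)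
  · -- i_symm
    intro a b
    by_cases hab : a ∈ p.X ∧ b ∈ p.X
    · rw [hiX a b hab.1 hab.2, hiX b a hab.2 hab.1, p.i_symm]
    · have hba : ¬(b ∈ p.X ∧ a ∈ p.X) := fun h => hab ⟨h.2, h.1⟩
      by_cases h1 : le' a b
      · by_cases h2 : le' b a
        · have hab' : a = b := antisym' a b h1 h2
          rw [hab']
        · rw [hi1 a b hab h1, hi2 b a hba h2 h1]
      · by_cases h2 : le' b a
        · rw [hi2 a b hab h1 h2, hi1 b a hba h2]
        · rw [hi0 a b hab h1 h2, hi0 b a hba h2 h1]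
  · -- i_sub
    intro a ha b hb hne
    rcases ha with rfl | haX
    · -- a = s
      have hbX : b ∈ p.X := by
        rcases hb with rfl | hbX
        · exact absurd rfl hne
        · exact hbX
      have hns : ¬(s ∈ p.X ∧ b ∈ p.X) := fun h => hsnot h.1
      by_cases h1 : le' s b
      · rw [hi1 s b hns h1]; exact Set.singleton_subset_iff.2 (Set.mem_insert _ _)
      · by_cases h2 : le' b s
        · rw [hi2 s b hns h1 h2]
          exact Set.singleton_subset_iff.2 (Set.subset_insert _ _ hbX)
        · rw [hi0 s b hns h1 h2]; exact Set.empty_subset _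
    · rcases hb with rfl | hbX
      · have hns : ¬(a ∈ p.X ∧ s ∈ p.X) := fun h => hsnot h.2
        by_cases h1 : le' a s
        · rw [hi1 a s hns h1]
          exact Set.singleton_subset_iff.2 (Set.subset_insert _ _ haX)
        · by_cases h2 : le' s a
          · rw [hi2 a s hns h1 h2]
            exact Set.singleton_subset_iff.2 (Set.mem_insert _ _)
          · rw [hi0 a s hns h1 h2]; exact Set.empty_subset _
      · rw [hiX a b haX hbX]
        exact (p.i_sub a haX b hbX hne).trans (Set.subset_insert _ _)
  · -- i_spec
    intro a ha b hb hne u hu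
    rcases ha with rfl | haX
    · -- a = s
      have hbX : b ∈ p.X := by
        rcases hb with rfl | hbX
        · exact absurd rfl hne
        · exact hbX
      have hns : ¬(s ∈ p.X ∧ b ∈ p.X) := fun h => hsnot h.1
      have hnbs : ¬le' b s := fun h => hsnot ((h_to_s b h) ▸ hbX)
      by_cases h1 : le' s b
      · rw [hi1 s b hns h1]
        constructor
        · rintro ⟨hus, _⟩; exact ⟨s, rfl, hus⟩
        · rintro ⟨v, hv, huv⟩
          rw [Set.mem_singleton_iff] at hv
          subst hv
          exact ⟨huv, trans' u s b huv h1⟩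
      · rw [hi0 s b hns h1 hnbs]
        constructor
        · rintro ⟨hus, hub⟩
          exact absurd (trans' s u b ((h_to_s u hus).symm ▸ (hss)) hub) h1
        · rintro ⟨v, hv, _⟩; exact absurd hv (Set.notMem_empty v)
    · rcases hb with rfl | hbX
      · -- b = s
        have hns : ¬(a ∈ p.X ∧ s ∈ p.X) := fun h => hsnot h.2
        have hnas : ¬le' a s := fun h => hsnot ((h_to_s a h) ▸ haX)
        by_cases h2 : le' s a
        · rw [hi2 a s hns hnas h2]
          constructor
          · rintro ⟨_, hus⟩; exact ⟨s, rfl, hus⟩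
          · rintro ⟨v, hv, huv⟩
            rw [Set.mem_singleton_iff] at hv
            subst hv
            exact ⟨trans' u s a huv h2, huv⟩
        · rw [hi0 a s hns hnas h2]
          constructor
          · rintro ⟨hua, hus⟩
            exact absurd (trans' s u a ((h_to_s u hus).symm ▸ hss) hua) h2
          · rintro ⟨v, hv, _⟩; exact absurd hv (Set.notMem_empty v)
      · -- a, b ∈ p.X
        rw [hiX a b haX hbX]
        rcases hu with rfl | huX
        · -- u = s
          constructor
          · rintro ⟨h1, h2⟩
            have h1' : p.le t a := by
              rcases (hsle a).1 h1 with h | h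
              · exact absurd (h ▸ haX) hsnot
              · exact h.2
            have h2' : p.le t b := by
              rcases (hsle b).1 h2 with h | h
              · exact absurd (h ▸ hbX) hsnot
              · exact h.2
            obtain ⟨v, hv, hle⟩ := (p.i_spec a haX b hbX hne t ht).1 ⟨h1', h2'⟩
            exact ⟨v, hv, (hsle v).2 (Or.inr ⟨p.i_sub a haX b hbX hne hv, hle⟩)⟩
          · rintro ⟨v, hv, hle⟩
            have hvX : v ∈ p.X := p.i_sub a haX b hbX hne hv
            have hle' : p.le t v := by
              rcases (hsle v).1 hle with h | h
              · exact absurd (h ▸ hvX) hsnot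
              · exact h.2
            obtain ⟨h1, h2⟩ := (p.i_spec a haX b hbX hne t ht).2 ⟨v, hv, hle'⟩
            exact ⟨(hsle a).2 (Or.inr ⟨haX, h1⟩), (hsle b).2 (Or.inr ⟨hbX, h2⟩)⟩
        · -- u ∈ p.X
          constructor
          · rintro ⟨h1, h2⟩
            obtain ⟨v, hv, hle⟩ := (p.i_spec a haX b hbX hne u huX).1
              ⟨((hXle u huX a).1 h1).2, ((hXle u huX b).1 h2).2⟩
            exact ⟨v, hv, (hXle u huX v).2 ⟨p.i_sub a haX b hbX hne hv, hle⟩⟩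
          · rintro ⟨v, hv, hle⟩
            have hvX : v ∈ p.X := p.i_sub a haX b hbX hne hv
            obtain ⟨h1, h2⟩ := (p.i_spec a haX b hbX hne u huX).2
              ⟨v, hv, ((hXle u huX v).1 hle).2⟩
            exact ⟨(hXle u huX a).2 ⟨haX, h1⟩, (hXle u huX b).2 ⟨hbX, h2⟩⟩
  · -- P4
    intro a ha b hb hne ha1 hb1
    have haX : a ∈ p.X := by
      rcases ha with rfl | h
      · exact absurd ha1 (ne_of_lt hα1)
      · exact h
    have hbX : b ∈ p.X := by
      rcases hb with rfl | h
      · exact absurd hb1 (ne_of_lt hα1)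
      · exact h
    rw [hiX a b haX hbX]
    exact p.P4 a haX b hbX hne ha1 hb1
  · -- P5
    intro a ha b hb hne heq hlt
    rcases ha with rfl | haX
    · have hbX : b ∈ p.X := by
        rcases hb with rfl | h
        · exact absurd rfl hne
        · exact h
      have hns : ¬(s ∈ p.X ∧ b ∈ p.X) := fun h => hsnot h.1
      have hnbs : ¬le' b s := fun h => hsnot ((h_to_s b h) ▸ hbX)
      have hnsb : ¬le' s b := by
        intro h
        rcases (hsle b).1 h with h' | h'
        · exact hsnot (h' ▸ hbX)
        · have : t.1 ≤ b.1 := htlev b hbX h'.2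
          rw [← heq] at this
          exact absurd (lt_of_lt_of_le hα this) (lt_irrefl _)
      exact hi0 s b hns hnsb hnbs
    · rcases hb with rfl | hbX
      · have hns : ¬(a ∈ p.X ∧ s ∈ p.X) := fun h => hsnot h.2
        have hnas : ¬le' a s := fun h => hsnot ((h_to_s a h) ▸ haX)
        have hnsa : ¬le' s a := by
          intro h
          rcases (hsle a).1 h with h' | h'
          · exact hsnot (h' ▸ haX)
          · have : t.1 ≤ a.1 := htlev a haX h'.2
            rw [heq] at this
            exact absurd (lt_of_lt_of_le hα this) (lt_irrefl _)
        exact hi0 a s hns hnas hnsa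
      · rw [hiX a b haX hbX]
        exact p.P5 a haX b hbX hne heq hlt
  · -- P6
    intro a ha b hb hab hne β hβ
    rcases (le'_def a b).1 hab with ⟨haX, hbX, h⟩ | ⟨h1a, h1b⟩ | ⟨h1a, hbX, h⟩
    · obtain ⟨u, huX, h1, h2, h3, h4⟩ := p.P6 a haX b hbX h hne β hβ
      exact ⟨u, Set.subset_insert _ _ huX, (hXle a haX u).2 ⟨huX, h1⟩,
        (hXle u huX b).2 ⟨hbX, h2⟩, h3, h4⟩
    · exact absurd (h1a.trans h1b.symm) hne
    · -- a = s, b ∈ p.X, p.le t b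
      subst h1a
      by_cases hbt : b = t
      · subst hbt
        have hβα : β = α := hsucc β hβ
        refine ⟨s, Set.mem_insert _ _, hss, ?_, fun h => hsnot (h ▸ hbX), by rw [hβα]⟩
        exact (hsle b).2 (Or.inr ⟨hbX, h⟩)
      · obtain ⟨u, huX, h1, h2, h3, h4⟩ := p.P6 t ht b hbX h (fun h' => hbt h'.symm) β hβ
        exact ⟨u, Set.subset_insert _ _ huX, (hsle u).2 (Or.inr ⟨huX, h1⟩),
          (hXle u huX b).2 ⟨hbX, h2⟩, h3, h4⟩
  · -- ext
    refine ⟨Set.subset_insert _ _, ?_, ?_⟩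
    · intro a ha b hb
      exact ⟨fun h => (hXle a ha b).2 ⟨hb, h⟩, fun h => ((hXle a ha b).1 h).2⟩
    · intro a ha b hb _
      exact (hiX a b ha hb).symm
  · -- the new point
    refine ⟨s, Set.mem_insert _ _, hsnot, rfl, hnc, ?_⟩
    intro x hx
    have h1 : le' s x ↔ p.le t x := by
      rw [hsle x]
      constructor
      · rintro (h | h)
        · exact absurd (h ▸ hx) hsnot
        · exact h.2
      · intro h; exact Or.inr ⟨hx, h⟩
    have h2 : le' t x ↔ p.le t x := by
      rw [hXle t ht x]
      exact ⟨fun h => h.2, fun h => ⟨hx, h⟩⟩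
    exact h1.trans h2.symm

/-- Density/extension lemma: every condition `p`, point `t ∈ X_p`, level `α < π(t)`
and `n < ω` admit an extension `p' ≤ p` containing a new point `s` of level `α` with
`ξ(s) > n` such that for all `x ∈ X_p`, `s ⪯' x` iff `t ⪯' x`. -/
theorem forcing_extension (lam : Cardinal.{0}) (hlam : Cardinal.aleph 3 ≤ lam)
    (F : Ordinal → Ordinal → Ordinal)
    (p : Cond lam F) (t : Ordinal × Ordinal) (ht : t ∈ p.X)
    (α : Ordinal) (hα : α < t.1) (n : ℕ) :
    ∃ p' : Cond lam F, p'.ext p ∧ ∃ s ∈ p'.X, s ∉ p.X ∧ s.1 = α ∧ (n : Ordinal) < s.2 ∧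
      ∀ x ∈ p.X, (p'.le s x ↔ p'.le t x) := by
  have main : ∀ γ : Ordinal, ∀ p : Cond lam F, ∀ t ∈ p.X, t.1 = γ → ∀ α < γ, ∀ n : ℕ,
      ∃ p' : Cond lam F, p'.ext p ∧ ∃ s ∈ p'.X, s ∉ p.X ∧ s.1 = α ∧ (n : Ordinal) < s.2 ∧
        ∀ x ∈ p.X, (p'.le s x ↔ p'.le t x) := by
    intro γ
    induction γ using Ordinal.induction with
    | _ γ IH =>
      intro p t ht htγ α hαγ n
      by_cases hex : ∃ β, γ = β + 1 ∧ α < β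
      · obtain ⟨β, hγβ, hαβ⟩ := hex
        have hβlt : β < γ := by
          rw [hγβ, Ordinal.add_one_eq_succ]; exact Order.lt_succ _
        have hsucc1 : ∀ δ, t.1 = δ + 1 → δ = β := by
          intro δ hδ
          have : δ + 1 = β + 1 := by rw [← hδ, htγ, hγβ]
          rw [Ordinal.add_one_eq_succ, Ordinal.add_one_eq_succ] at this
          exact Order.succ_injective this
        obtain ⟨p₁, hext₁, s₁, hs₁X, hs₁not, hs₁1, hn₁, hiff₁⟩ :=
          single_step p t ht β (htγ ▸ hβlt) hsucc1 n
        obtain ⟨p', hext', s, hsX, hsnot, hs1, hns, hiff'⟩ :=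
          IH β hβlt p₁ s₁ hs₁X hs₁1 α hαβ n
        refine ⟨p', Cond.ext_trans hext₁ hext', s, hsX,
          fun h => hsnot (hext₁.1 h), hs1, hns, ?_⟩
        intro x hx
        have hx₁ : x ∈ p₁.X := hext₁.1 hx
        rw [hiff' x hx₁, ← hext'.2.1 s₁ hs₁X x hx₁, ← hext'.2.1 t (hext₁.1 ht) x hx₁]
        exact hiff₁ x hx
      · have hsucc : ∀ β, t.1 = β + 1 → β = α := by
          intro β hβ
          have hβγ : γ = β + 1 := by rw [← htγ, hβ]
          have h1 : ¬ α < β := fun h => hex ⟨β, hβγ, h⟩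
          have h2 : α < β + 1 := hβγ ▸ hαγ
          rw [Ordinal.add_one_eq_succ, Order.lt_succ_iff] at h2
          exact le_antisymm (not_lt.1 h1) h2 |>.symm ▸ rfl
        exact single_step p t ht α (htγ ▸ hαγ) hsucc n
  exact main t.1 p t ht rfl α hα n
end
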